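/- arXiv:2408.16649 — 2 statements merged into one kernel-verified Lean document; each statement's English description precedes it below -/
import Mathlib

section
/- For every x ≥ 0 and ε > 0 there exist ε̃ > 0 and a constant c_{x,ε} > 0, depending on x and ε only, such that for all k, k₀ ∈ ℕ with 1 ≤ k₀ ≤ k, P( H_k ∈ B(x,ε) ) ≥ P( H_{k−k₀} ∈ B(x,ε̃) )^{d^{k₀}} · exp(−c_{x,ε}·d^{k₀}). -/
open MeasureTheory ProbabilityTheory Filter
open scoped NNReal ENNReal

noncomputable section

/-- The balanced increment attached to the edge from the vertex (word) `w` to its `i`-th child,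
built from the i.i.d. field `Z`. -/
def Ybal {Ω : Type} (d : ℕ) (Z : List (Fin d) × Fin d → Ω → ℝ)
    (w : List (Fin d)) (i : Fin d) (ω : Ω) : ℝ :=
  Z (w, i) ω - (1 / (d : ℝ)) * ∑ j : Fin d, Z (w, j) ω

/-- The balanced branching random walk at the vertex (word) `w`: the sum of the balanced
increments along the path from the root to `w`. -/
def Abal {Ω : Type} (d : ℕ) (Z : List (Fin d) × Fin d → Ω → ℝ)
    (w : List (Fin d)) (ω : Ω) : ℝ :=
  ∑ i : Fin w.length, Ybal d Z (w.take (i : ℕ)) (w.get i) ω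

/-- The approximation `M^{A,n}` of the multiplicative chaos mass at generation `n`. -/
def MAn {Ω : Type} (d : ℕ) (γ : ℝ) (Z : List (Fin d) × Fin d → Ω → ℝ)
    (n : ℕ) (ω : Ω) : ℝ :=
  (1 / (d : ℝ) ^ n) * ∑ v : Fin n → Fin d,
    Real.exp (γ * Abal d Z (List.ofFn v) ω - γ ^ 2 * n / 2)

end

noncomputable section

/-- `G(x) = -log E[exp(-λ e^{γx} M^A)]`. -/
def Gfun {Ω : Type} [MeasurableSpace Ω] (P : Measure Ω) (MA : Ω → ℝ)
    (lam γ : ℝ) (x : ℝ) : ℝ :=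
  -Real.log (∫ ω, Real.exp (-(lam * Real.exp (γ * x)) * MA ω) ∂P)

/-- `H_k = d^{-k} ∑_{v ∈ Gen_k} G(A_v)`. -/
def Hk {Ω : Type} [MeasurableSpace Ω] (P : Measure Ω) (d : ℕ) (γ lam : ℝ)
    (Z : List (Fin d) × Fin d → Ω → ℝ) (MA : Ω → ℝ) (k : ℕ) (ω : Ω) : ℝ :=
  (1 / (d : ℝ) ^ k) * ∑ v : Fin k → Fin d, Gfun P MA lam γ (Abal d Z (List.ofFn v) ω)

end

/-! ### Auxiliary combinatorial material -/

noncomputable section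

abbrev myBase (d m : ℕ) := (Σ i : Fin m, (Fin (i : ℕ) → Fin d)) × Fin d

def emb (d m : ℕ) (pre : List (Fin d)) (b : myBase d m) : List (Fin d) × Fin d :=
  (pre ++ List.ofFn b.1.2, b.2)

lemma emb_inj (d m : ℕ) (pre : List (Fin d)) : Function.Injective (emb d m pre) := by
  rintro ⟨⟨i, w⟩, j⟩ ⟨⟨i', w'⟩, j'⟩ h
  simp only [emb, Prod.mk.injEq, List.append_cancel_left_eq] at h
  obtain ⟨h1, h2⟩ := h
  have hlen : (i : ℕ) = (i' : ℕ) := by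
    have := congrArg List.length h1
    simpa using this
  have hii : i = i' := Fin.ext hlen
  subst hii
  have hw : w = w' := List.ofFn_injective h1
  subst hw; subst h2; rfl

lemma ofFn_take {α : Type*} {m : ℕ} (v : Fin m → α) (i : Fin m) :
    (List.ofFn v).take (i : ℕ) = List.ofFn (fun j : Fin (i : ℕ) => v ⟨j, lt_trans j.2 i.2⟩) := by
  have hi := i.2
  apply List.ext_getElem
  · simp only [List.length_take, List.length_ofFn]
    omega
  · intro n h1 h2
    simp only [List.getElem_take, List.getElem_ofFn]

def AbalT (d m : ℕ) (g : myBase d m → ℝ) (v : Fin m → Fin d) : ℝ :=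
  ∑ i : Fin m,
    (g (⟨i, fun j => v ⟨j, lt_trans j.2 i.2⟩⟩, v i)
      - (1 / (d : ℝ)) * ∑ jj : Fin d, g (⟨i, fun j => v ⟨j, lt_trans j.2 i.2⟩⟩, jj))

lemma Abal_eq_AbalT {Ω : Type} (d m : ℕ) (Z' : List (Fin d) × Fin d → Ω → ℝ) (ω : Ω)
    (v : Fin m → Fin d) :
    Abal d Z' (List.ofFn v) ω = AbalT d m (fun b => Z' (List.ofFn b.1.2, b.2) ω) v := by
  unfold Abal AbalT
  refine Fintype.sum_equiv (finCongr (List.length_ofFn (f := v))) _ _ ?_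
  intro i
  have hi : ((i : ℕ) : ℕ) < m := by
    have := i.2; simpa [List.length_ofFn] using this
  have htake := ofFn_take v ⟨(i : ℕ), hi⟩
  have hget : (List.ofFn v).get i = v ⟨(i : ℕ), hi⟩ := by
    simp [List.get_eq_getElem, List.getElem_ofFn]
  simp only [Ybal, Fin.val_mk] at htake ⊢
  rw [htake, hget]
  rfl

lemma Abal_append {Ω : Type} (d : ℕ) (Z : List (Fin d) × Fin d → Ω → ℝ)
    (s t : List (Fin d)) (ω : Ω) :
    Abal d Z (s ++ t) ω = Abal d Z s ω + Abal d (fun e => Z (s ++ e.1, e.2)) t ω := by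
  unfold Abal
  rw [Fintype.sum_equiv (finCongr (List.length_append (as := s) (bs := t)))
    _ (fun i : Fin (s.length + t.length) =>
        Ybal d Z ((s ++ t).take (i : ℕ)) ((s ++ t).get ⟨(i : ℕ), by
          rw [List.length_append]; exact i.2⟩) ω) (by intro i; rfl)]
  rw [Fin.sum_univ_add]
  congr 1
  · apply Finset.sum_congr rfl
    intro i _
    have h1 : (s ++ t).take ((Fin.castAdd t.length i : Fin _) : ℕ) = s.take (i : ℕ) := by
      simp [List.take_append_of_le_length (le_of_lt i.2)]
    have h2 : (s ++ t).get ⟨((Fin.castAdd t.length i : Fin _) : ℕ), by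
          rw [List.length_append]; exact (Fin.castAdd t.length i).2⟩ = s.get i := by
      simp [List.get_eq_getElem, List.getElem_append_left i.2]
    rw [h1, h2]
  · apply Finset.sum_congr rfl
    intro i _
    have h1 : (s ++ t).take ((Fin.natAdd s.length i : Fin _) : ℕ) = s ++ t.take (i : ℕ) := by
      simp [Fin.natAdd, List.take_append]
    have h2 : (s ++ t).get ⟨((Fin.natAdd s.length i : Fin _) : ℕ), by
          rw [List.length_append]; exact (Fin.natAdd s.length i).2⟩ = t.get i := by
      simp [List.get_eq_getElem, List.getElem_append_right (Nat.le_add_right s.length (i : ℕ))]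
    rw [h1, h2]
    simp [Ybal]

def joinFn {d k₀ m k : ℕ} (h : k₀ + m = k) (u : Fin k₀ → Fin d) (w : Fin m → Fin d) :
    Fin k → Fin d :=
  fun i => Sum.elim u w (finSumFinEquiv.symm (Fin.cast h.symm i))

lemma ofFn_joinFn {d k₀ m k : ℕ} (h : k₀ + m = k) (u : Fin k₀ → Fin d) (w : Fin m → Fin d) :
    List.ofFn (joinFn h u w) = List.ofFn u ++ List.ofFn w := by
  apply List.ext_getElem
  · simp; omega
  · intro n h1 h2
    simp only [List.getElem_ofFn, joinFn]
    rcases hx : finSumFinEquiv.symm (Fin.cast h.symm ⟨n, by simpa using h1⟩) with i | i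
    · have h3 : (Fin.cast h.symm ⟨n, by simpa using h1⟩ : Fin (k₀ + m))
          = finSumFinEquiv (Sum.inl i) := (Equiv.symm_apply_eq _).mp hx
      have hni : n = (i : ℕ) := by simpa using congrArg Fin.val h3
      rw [List.getElem_append_left (by simpa [hni] using i.2)]
      simp only [Sum.elim_inl, List.getElem_ofFn]
      congr 1
      exact Fin.ext hni.symm
    · have h3 : (Fin.cast h.symm ⟨n, by simpa using h1⟩ : Fin (k₀ + m))
          = finSumFinEquiv (Sum.inr i) := (Equiv.symm_apply_eq _).mp hx
      have hni : n = k₀ + (i : ℕ) := by simpa using congrArg Fin.val h3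
      rw [List.getElem_append_right (by simp [hni])]
      simp only [Sum.elim_inr, List.getElem_ofFn]
      congr 1
      apply Fin.ext
      simp [hni]

lemma sum_join {d k₀ m k : ℕ} (h : k₀ + m = k) (F : (Fin k → Fin d) → ℝ) :
    ∑ v : Fin k → Fin d, F v
      = ∑ u : Fin k₀ → Fin d, ∑ w : Fin m → Fin d, F (joinFn h u w) := by
  have h1 : ∑ p : (Fin k₀ → Fin d) × (Fin m → Fin d), F (joinFn h p.1 p.2)
      = ∑ v : Fin k → Fin d, F v := by
    apply Fintype.sum_equiv
      (((Equiv.sumArrowEquivProdArrow (Fin k₀) (Fin m) (Fin d)).symm).trans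
        (Equiv.arrowCongr (finSumFinEquiv.trans (finCongr h)) (Equiv.refl (Fin d))))
    intro p
    have he : (((Equiv.sumArrowEquivProdArrow (Fin k₀) (Fin m) (Fin d)).symm).trans
        (Equiv.arrowCongr (finSumFinEquiv.trans (finCongr h)) (Equiv.refl (Fin d)))) p
        = joinFn h p.1 p.2 := by
      funext i
      simp [joinFn, Equiv.sumArrowEquivProdArrow, Equiv.arrowCongr, finCongr]
    rw [he]
  rw [← h1, Fintype.sum_prod_type]

/-! ### Arithmetic lemmas -/

lemma geo_le_one (n : ℕ) : ∑ i ∈ Finset.range n, ((2:ℝ)⁻¹)^(n - i) ≤ 1 := by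
  induction n with
  | zero => simp
  | succ n ih =>
    have hstep : ∑ i ∈ Finset.range n, ((2:ℝ)⁻¹)^(n + 1 - i)
        = (2:ℝ)⁻¹ * ∑ i ∈ Finset.range n, ((2:ℝ)⁻¹)^(n - i) := by
      rw [Finset.mul_sum]
      apply Finset.sum_congr rfl
      intro i hi
      rw [Finset.mem_range] at hi
      rw [show n + 1 - i = (n - i) + 1 by omega, pow_succ]
      ring
    rw [Finset.sum_range_succ, hstep]
    have h2 : ((2:ℝ)⁻¹)^(n + 1 - n) = (2:ℝ)⁻¹ := by
      rw [show n + 1 - n = 1 by omega, pow_one]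
    rw [h2]
    nlinarith [ih]

lemma sum_geom_two (n : ℕ) :
    ∑ j ∈ Finset.range n, ((j:ℝ) + 2) * ((2:ℝ)⁻¹)^j = 6 - 2 * ((n:ℝ) + 3) * ((2:ℝ)⁻¹)^n := by
  induction n with
  | zero => norm_num
  | succ n ih =>
    rw [Finset.sum_range_succ, ih, pow_succ]
    push_cast
    ring

lemma sum_geom_two_le (n : ℕ) : ∑ j ∈ Finset.range n, ((j:ℝ) + 2) * ((2:ℝ)⁻¹)^j ≤ 6 := by
  rw [sum_geom_two]
  have : 0 ≤ 2 * ((n:ℝ) + 3) * ((2:ℝ)⁻¹)^n := by positivity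
  linarith

lemma factor_lb {δ : ℝ} (hδpos : 0 < δ) (hδ1 : δ ≤ 1) (M : ℕ) :
    Real.exp (-(((M:ℝ) + 1)) * Real.log (8/δ)) ≤ δ * ((2:ℝ)⁻¹)^(M+1) / 4 := by
  have hRHSpos : 0 < δ * ((2:ℝ)⁻¹)^(M+1) / 4 := by positivity
  have hlog2 : 0 < Real.log 2 := Real.log_pos (by norm_num)
  have hlogδ : Real.log δ ≤ 0 := Real.log_nonpos hδpos.le hδ1
  have hA : Real.log (8/δ) = 3 * Real.log 2 - Real.log δ := by
    rw [Real.log_div (by norm_num) hδpos.ne', show (8:ℝ) = 2^3 by norm_num, Real.log_pow]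
    push_cast; ring
  have hRHSlog : Real.log (δ * ((2:ℝ)⁻¹)^(M+1) / 4)
      = Real.log δ - ((M:ℝ) + 1) * Real.log 2 - 2 * Real.log 2 := by
    rw [Real.log_div (by positivity) (by norm_num), Real.log_mul hδpos.ne' (by positivity),
      Real.log_pow, Real.log_inv, show (4:ℝ) = 2^2 by norm_num, Real.log_pow]
    push_cast; ring
  calc Real.exp (-(((M:ℝ) + 1)) * Real.log (8/δ))
      ≤ Real.exp (Real.log (δ * ((2:ℝ)⁻¹)^(M+1) / 4)) := by
        apply Real.exp_le_exp.mpr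
        rw [hA, hRHSlog]
        nlinarith [hlogδ, hlog2, Nat.cast_nonneg (α := ℝ) M]
    _ = δ * ((2:ℝ)⁻¹)^(M+1) / 4 := Real.exp_log hRHSpos

lemma sum_depth_bound (d k₀ : ℕ) (hd : 2 ≤ d) :
    ∑ b : myBase d k₀, (((k₀ - (b.1.1 : ℕ) : ℕ) : ℝ) + 1) ≤ 6 * (d:ℝ)^k₀ := by
  have hd0 : (0:ℝ) < (d:ℝ) := by
    have : 0 < d := by omega
    exact_mod_cast this
  have hstep1 : ∑ b : myBase d k₀, (((k₀ - (b.1.1 : ℕ) : ℕ) : ℝ) + 1)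
      = ∑ σ : (Σ i : Fin k₀, (Fin (i : ℕ) → Fin d)),
          (d : ℝ) * (((k₀ - (σ.1 : ℕ) : ℕ) : ℝ) + 1) := by
    rw [Fintype.sum_prod_type]
    apply Finset.sum_congr rfl
    intro σ _
    simp [Finset.sum_const, mul_comm, mul_add]
  have hstep2 : ∑ σ : (Σ i : Fin k₀, (Fin (i : ℕ) → Fin d)),
        (d : ℝ) * (((k₀ - (σ.1 : ℕ) : ℕ) : ℝ) + 1)
      = ∑ i : Fin k₀, ((d:ℝ) ^ (i:ℕ)) * ((d : ℝ) * (((k₀ - (i : ℕ) : ℕ) : ℝ) + 1)) := by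
    rw [← Finset.univ_sigma_univ, Finset.sum_sigma]
    apply Finset.sum_congr rfl
    intro i _
    have : ∀ s : Fin (i:ℕ) → Fin d,
        (d:ℝ) * (((k₀ - ((⟨i, s⟩ : Σ i : Fin k₀, (Fin (i : ℕ) → Fin d)).1 : ℕ) : ℕ) : ℝ) + 1)
        = (d:ℝ) * (((k₀ - (i : ℕ) : ℕ) : ℝ) + 1) := fun s => rfl
    rw [Finset.sum_congr rfl (fun s _ => this s), Finset.sum_const]
    have hcard : Fintype.card (Fin (i:ℕ) → Fin d) = d ^ (i:ℕ) := by
      simp [Fintype.card_fun]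
    simp only [Finset.card_univ, hcard, nsmul_eq_mul]
    push_cast
    ring
  rw [hstep1, hstep2, Fin.sum_univ_eq_sum_range
    (fun i => ((d:ℝ) ^ i) * ((d : ℝ) * (((k₀ - i : ℕ) : ℝ) + 1)))]
  rw [← Finset.sum_range_reflect]
  have hterm : ∀ j ∈ Finset.range k₀,
      ((d:ℝ) ^ (k₀ - 1 - j)) * ((d : ℝ) * (((k₀ - (k₀ - 1 - j) : ℕ) : ℝ) + 1))
        ≤ (d:ℝ)^k₀ * (((j:ℝ) + 2) * ((2:ℝ)⁻¹)^j) := by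
    intro j hj
    rw [Finset.mem_range] at hj
    have e1 : (k₀ - (k₀ - 1 - j) : ℕ) = j + 1 := by omega
    have e2 : (d:ℝ) ^ (k₀ - 1 - j) * (d:ℝ) = (d:ℝ) ^ (k₀ - j) := by
      rw [← pow_succ]
      congr 1
      omega
    have h2d : (2:ℝ)^j ≤ (d:ℝ)^j := by
      apply pow_le_pow_left₀ (by norm_num)
      exact_mod_cast hd
    have e3 : (d:ℝ) ^ (k₀ - j) * (d:ℝ)^j = (d:ℝ)^k₀ := by
      rw [← pow_add]
      congr 1
      omega
    have key : (d:ℝ) ^ (k₀ - j) ≤ (d:ℝ)^k₀ * ((2:ℝ)⁻¹)^j := by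
      rw [inv_pow, ← div_eq_mul_inv, le_div_iff₀ (by positivity)]
      calc (d:ℝ) ^ (k₀ - j) * 2^j ≤ (d:ℝ) ^ (k₀ - j) * (d:ℝ)^j := by
            apply mul_le_mul_of_nonneg_left h2d (by positivity)
        _ = (d:ℝ)^k₀ := e3
    rw [e1]
    push_cast
    calc (d:ℝ) ^ (k₀ - 1 - j) * ((d:ℝ) * ((j:ℝ) + 1 + 1))
        = ((d:ℝ) ^ (k₀ - 1 - j) * (d:ℝ)) * ((j:ℝ) + 2) := by ring
      _ = (d:ℝ) ^ (k₀ - j) * ((j:ℝ) + 2) := by rw [e2]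
      _ ≤ ((d:ℝ)^k₀ * ((2:ℝ)⁻¹)^j) * ((j:ℝ) + 2) := by
          apply mul_le_mul_of_nonneg_right key (by positivity)
      _ = (d:ℝ)^k₀ * (((j:ℝ) + 2) * ((2:ℝ)⁻¹)^j) := by ring
  calc ∑ j ∈ Finset.range k₀,
        ((d:ℝ) ^ (k₀ - 1 - j)) * ((d : ℝ) * (((k₀ - (k₀ - 1 - j) : ℕ) : ℝ) + 1))
      ≤ ∑ j ∈ Finset.range k₀, (d:ℝ)^k₀ * (((j:ℝ) + 2) * ((2:ℝ)⁻¹)^j) :=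
        Finset.sum_le_sum hterm
    _ = (d:ℝ)^k₀ * ∑ j ∈ Finset.range k₀, (((j:ℝ) + 2) * ((2:ℝ)⁻¹)^j) := by
        rw [Finset.mul_sum]
    _ ≤ (d:ℝ)^k₀ * 6 := by
        apply mul_le_mul_of_nonneg_left (sum_geom_two_le k₀) (by positivity)
    _ = 6 * (d:ℝ)^k₀ := by ring

/-! ### Analytic properties of `Gfun` -/

def Jint {Ω : Type} [MeasurableSpace Ω] (P : Measure Ω) (MA : Ω → ℝ) (t : ℝ) : ℝ :=
  ∫ ω, Real.exp (-t * MA ω) ∂P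

variable {Ω : Type} [MeasurableSpace Ω] (P : Measure Ω) [IsProbabilityMeasure P] (MA : Ω → ℝ)

lemma Gfun_eq (lam γ x : ℝ) :
    Gfun P MA lam γ x = -Real.log (Jint P MA (lam * Real.exp (γ * x))) := rfl

lemma Jint_integrable (hMAmeas : Measurable MA) (hMAnonneg : ∀ᵐ ω ∂P, 0 ≤ MA ω)
    {t : ℝ} (ht : 0 ≤ t) :
    Integrable (fun ω => Real.exp (-t * MA ω)) P := by
  apply Integrable.mono' (integrable_const 1)
  · exact ((hMAmeas.const_mul (-t)).exp).aestronglyMeasurable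
  · filter_upwards [hMAnonneg] with ω h
    rw [Real.norm_eq_abs, abs_of_pos (Real.exp_pos _)]
    apply Real.exp_le_one_iff.mpr
    have : 0 ≤ t * MA ω := mul_nonneg ht h
    linarith

lemma Jint_pos (hMAmeas : Measurable MA) (hMAnonneg : ∀ᵐ ω ∂P, 0 ≤ MA ω)
    {t : ℝ} (ht : 0 ≤ t) : 0 < Jint P MA t := by
  rw [Jint, integral_pos_iff_support_of_nonneg_ae
    (Filter.Eventually.of_forall fun ω => (Real.exp_pos _).le)
    (Jint_integrable P MA hMAmeas hMAnonneg ht)]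
  have : (Function.support fun ω => Real.exp (-t * MA ω)) = Set.univ := by
    apply Set.eq_univ_iff_forall.mpr
    intro ω
    exact Real.exp_ne_zero _
  rw [this]
  simp

lemma Jint_le_one (hMAmeas : Measurable MA) (hMAnonneg : ∀ᵐ ω ∂P, 0 ≤ MA ω)
    {t : ℝ} (ht : 0 ≤ t) : Jint P MA t ≤ 1 := by
  have h := integral_mono_ae (Jint_integrable P MA hMAmeas hMAnonneg ht)
      (integrable_const 1) ?_
  · simpa [Jint, neg_mul] using h
  · filter_upwards [hMAnonneg] with ω h
    apply Real.exp_le_one_iff.mpr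
    have : 0 ≤ t * MA ω := mul_nonneg ht h
    linarith

lemma Jint_anti (hMAmeas : Measurable MA) (hMAnonneg : ∀ᵐ ω ∂P, 0 ≤ MA ω)
    {t t' : ℝ} (h0 : 0 ≤ t) (h : t ≤ t') : Jint P MA t' ≤ Jint P MA t := by
  apply integral_mono_ae (Jint_integrable P MA hMAmeas hMAnonneg (h0.trans h))
    (Jint_integrable P MA hMAmeas hMAnonneg h0)
  filter_upwards [hMAnonneg] with ω hω
  apply Real.exp_le_exp.mpr
  nlinarith

lemma Gfun_nonneg (hMAmeas : Measurable MA) (hMAnonneg : ∀ᵐ ω ∂P, 0 ≤ MA ω)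
    {lam γ : ℝ} (hlam : 0 < lam) (x : ℝ) : 0 ≤ Gfun P MA lam γ x := by
  have ht : (0:ℝ) ≤ lam * Real.exp (γ * x) := by positivity
  rw [Gfun_eq]
  have h1 := Jint_le_one P MA hMAmeas hMAnonneg ht
  have h2 := Jint_pos P MA hMAmeas hMAnonneg ht
  simp only [neg_nonneg]
  exact Real.log_nonpos h2.le h1

lemma Gfun_mono (hMAmeas : Measurable MA) (hMAnonneg : ∀ᵐ ω ∂P, 0 ≤ MA ω)
    {lam γ : ℝ} (hlam : 0 < lam) (hγ : 0 < γ) : Monotone (Gfun P MA lam γ) := by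
  intro a b hab
  rw [Gfun_eq, Gfun_eq, neg_le_neg_iff]
  have hta : (0:ℝ) ≤ lam * Real.exp (γ * a) := by positivity
  have htab : lam * Real.exp (γ * a) ≤ lam * Real.exp (γ * b) := by
    apply mul_le_mul_of_nonneg_left _ hlam.le
    exact Real.exp_le_exp.mpr (by nlinarith)
  have hJb := Jint_pos P MA hMAmeas hMAnonneg (hta.trans htab)
  have hJ := Jint_anti P MA hMAmeas hMAnonneg hta htab
  exact Real.log_le_log hJb hJ

lemma Gfun_measurable (hMAmeas : Measurable MA) (hMAnonneg : ∀ᵐ ω ∂P, 0 ≤ MA ω)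
    {lam γ : ℝ} (hlam : 0 < lam) (hγ : 0 < γ) : Measurable (Gfun P MA lam γ) :=
  (Gfun_mono P MA hMAmeas hMAnonneg hlam hγ).measurable

lemma Gfun_key (hMAmeas : Measurable MA) (hMAnonneg : ∀ᵐ ω ∂P, 0 ≤ MA ω)
    {lam γ : ℝ} (hlam : 0 < lam) (hγ : 0 < γ) {δ : ℝ} (hδ : 0 ≤ δ) (y : ℝ) :
    Gfun P MA lam γ (y + δ) ≤ Real.exp (γ * δ) * Gfun P MA lam γ y := by
  set t := lam * Real.exp (γ * y) with htdef
  set c := Real.exp (γ * δ) with hcdef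
  have hcpos : 0 < c := Real.exp_pos _
  have hc1 : 1 ≤ c := Real.one_le_exp (by positivity)
  have htpos : 0 < t := by positivity
  have hct : lam * Real.exp (γ * (y + δ)) = c * t := by
    rw [htdef, hcdef, mul_add, Real.exp_add]; ring
  have hp0 : (0:ℝ) ≤ 1 / c := by positivity
  have hp1 : 1 / c ≤ 1 := by
    rw [div_le_one hcpos]; exact hc1
  have hfc : ∀ ω, (Real.exp (-(c * t) * MA ω)) ^ (1/c : ℝ) = Real.exp (-t * MA ω) := by
    intro ω
    rw [Real.rpow_def_of_pos (Real.exp_pos _), Real.log_exp]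
    congr 1
    field_simp
  have hJensen : Jint P MA t ≤ (Jint P MA (c * t)) ^ (1/c : ℝ) := by
    have h := ConcaveOn.le_map_integral (μ := P)
      (Real.concaveOn_rpow hp0 hp1)
      (fun z hz => (Real.continuousAt_rpow_const z (1/c)
        (Or.inr hp0)).continuousWithinAt)
      isClosed_Ici
      (Filter.Eventually.of_forall (fun ω => Set.mem_Ici.mpr (Real.exp_pos (-(c*t) * MA ω)).le))
      (Jint_integrable P MA hMAmeas hMAnonneg (show (0:ℝ) ≤ c * t by positivity))
      ?_
    · rw [Jint, Jint]
      calc ∫ ω, Real.exp (-t * MA ω) ∂P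
          = ∫ ω, (Real.exp (-(c*t) * MA ω)) ^ (1/c : ℝ) ∂P := by
            apply integral_congr_ae
            exact Filter.Eventually.of_forall fun ω => (hfc ω).symm
        _ ≤ (∫ ω, Real.exp (-(c*t) * MA ω) ∂P) ^ (1/c : ℝ) := h
    · have : ((fun z : ℝ => z ^ (1/c : ℝ)) ∘ fun ω => Real.exp (-(c*t) * MA ω))
          = fun ω => Real.exp (-t * MA ω) := by
        funext ω; exact hfc ω
      rw [this]
      exact Jint_integrable P MA hMAmeas hMAnonneg htpos.le
  have hJt := Jint_pos P MA hMAmeas hMAnonneg htpos.le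
  have hJct := Jint_pos P MA hMAmeas hMAnonneg (by positivity : (0:ℝ) ≤ c * t)
  have hlog : Real.log (Jint P MA t) ≤ (1/c) * Real.log (Jint P MA (c * t)) := by
    calc Real.log (Jint P MA t) ≤ Real.log ((Jint P MA (c * t)) ^ (1/c : ℝ)) :=
          Real.log_le_log hJt hJensen
      _ = (1/c) * Real.log (Jint P MA (c * t)) := Real.log_rpow hJct _
  rw [Gfun_eq, Gfun_eq, hct]
  show -Real.log (Jint P MA (c * t)) ≤ c * -Real.log (Jint P MA t)
  have hmul := mul_le_mul_of_nonneg_left hlog hcpos.le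
  have hcc : c * ((1/c) * Real.log (Jint P MA (c * t))) = Real.log (Jint P MA (c * t)) := by
    field_simp
  rw [hcc] at hmul
  linarith

/-! ### Independence infrastructure -/

lemma meas_iInter_single {ι : Type*} (f : ι → Ω → ℝ)
    (hindep : iIndepFun f P)
    {κ : Type*} [Fintype κ] [DecidableEq ι] (ρ : κ → ι) (hρ : Function.Injective ρ)
    (sets : κ → Set ℝ) (hsets : ∀ b, MeasurableSet (sets b)) :
    P (⋂ b, f (ρ b) ⁻¹' sets b) = ∏ b, P (f (ρ b) ⁻¹' sets b) := by
  classical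
  have h := hindep.measure_inter_preimage_eq_mul (Finset.univ.image ρ)
      (sets := fun i => Function.extend ρ sets (fun _ => Set.univ) i) ?_
  · have hL : (⋂ i ∈ Finset.univ.image ρ, f i ⁻¹' Function.extend ρ sets (fun _ => Set.univ) i)
        = ⋂ b, f (ρ b) ⁻¹' sets b := by
      ext ω
      simp only [Set.mem_iInter, Finset.mem_image, Finset.mem_univ, true_and]
      constructor
      · intro h b
        have := h (ρ b) ⟨b, rfl⟩
        rwa [hρ.extend_apply] at this
      · rintro h i ⟨b, rfl⟩
        rw [hρ.extend_apply]
        exact h b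
    have hR : (∏ i ∈ Finset.univ.image ρ, P (f i ⁻¹' Function.extend ρ sets (fun _ => Set.univ) i))
        = ∏ b, P (f (ρ b) ⁻¹' sets b) := by
      rw [Finset.prod_image (fun b _ b' _ h => hρ h)]
      apply Finset.prod_congr rfl
      intro b _
      rw [hρ.extend_apply]
    rw [hL, hR] at h
    exact h
  · intro i hi
    simp only [Finset.mem_image, Finset.mem_univ, true_and] at hi
    obtain ⟨b, rfl⟩ := hi
    show MeasurableSet (Function.extend ρ sets (fun _ => Set.univ) (ρ b))
    rw [hρ.extend_apply]
    exact hsets b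

lemma map_tuple_eq_pi {ι : Type*} [DecidableEq ι] (f : ι → Ω → ℝ)
    (hmeas : ∀ i, Measurable (f i))
    (hindep : iIndepFun f P)
    (ν : Measure ℝ) [IsProbabilityMeasure ν] (hlaw : ∀ i, P.map (f i) = ν)
    {κ : Type*} [Fintype κ] (ρ : κ → ι) (hρ : Function.Injective ρ) :
    P.map (fun ω (b : κ) => f (ρ b) ω) = Measure.pi (fun _ : κ => ν) := by
  have hmeasT : Measurable (fun ω (b : κ) => f (ρ b) ω) :=
    measurable_pi_lambda _ fun b => hmeas (ρ b)
  haveI : IsProbabilityMeasure (P.map (fun ω (b : κ) => f (ρ b) ω)) :=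
    Measure.isProbabilityMeasure_map hmeasT.aemeasurable
  apply MeasureTheory.ext_of_generate_finite _ generateFrom_pi.symm isPiSystem_pi
  · rintro s ⟨A, hA, rfl⟩
    simp only [Set.mem_pi, Set.mem_univ, true_implies, Set.mem_setOf_eq] at hA
    have hAm : ∀ b, MeasurableSet (A b) := fun b => hA b
    rw [Measure.map_apply hmeasT (MeasurableSet.univ_pi hAm)]
    have hpre : (fun ω (b : κ) => f (ρ b) ω) ⁻¹' Set.univ.pi A
        = ⋂ b, f (ρ b) ⁻¹' A b := by
      ext ω; simp [Set.mem_pi]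
    rw [hpre, meas_iInter_single P f hindep ρ hρ A hAm, Measure.pi_pi]
    apply Finset.prod_congr rfl
    intro b _
    rw [← hlaw (ρ b), Measure.map_apply (hmeas (ρ b)) (hAm b)]
  · simp

lemma meas_iInter_blocks {ι : Type*} [DecidableEq ι] (f : ι → Ω → ℝ)
    (hmeas : ∀ i, Measurable (f i))
    (hindep : iIndepFun f P)
    {J : Type*} [Fintype J] [DecidableEq J]
    {κ : J → Type*} [∀ j, Fintype (κ j)]
    (ρ : ∀ j, κ j → ι)
    (hdisj : ∀ j j', j ≠ j' → ∀ a b, ρ j a ≠ ρ j' b)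
    (M : ∀ j, Set (κ j → ℝ)) (hM : ∀ j, MeasurableSet (M j)) :
    P (⋂ j, {ω | (fun b => f (ρ j b) ω) ∈ M j}) = ∏ j, P {ω | (fun b => f (ρ j b) ω) ∈ M j} := by
  classical
  set A : J → Set Ω := fun j => {ω | (fun b => f (ρ j b) ω) ∈ M j} with hA
  set B : J → Finset ι := fun j => Finset.univ.image (ρ j) with hB
  have key : ∀ s : Finset J, P (⋂ j ∈ s, A j) = ∏ j ∈ s, P (A j) := by
    intro s
    induction s using Finset.induction_on with
    | empty => simp
    | @insert a s ha ih =>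
      set T : Finset ι := B a with hT
      set S : Finset ι := s.biUnion B with hS
      have hST : Disjoint S T := by
        rw [Finset.disjoint_left]
        intro i hiS hiT
        simp only [hS, Finset.mem_biUnion, hB, Finset.mem_image, Finset.mem_univ, true_and]
          at hiS
        simp only [hT, hB, Finset.mem_image, Finset.mem_univ, true_and] at hiT
        obtain ⟨j, hj, b, rfl⟩ := hiS
        obtain ⟨b', hb'⟩ := hiT
        exact hdisj a j (fun h => ha (h ▸ hj)) b' b hb'
      have hIndepF := hindep.indepFun_finset S T hST hmeas
      have hmemT : ∀ b : κ a, ρ a b ∈ T := by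
        intro b; simp [hT, hB]
      set Na : Set ((i : T) → ℝ) :=
        (fun g (b : κ a) => g ⟨ρ a b, hmemT b⟩) ⁻¹' M a with hNa
      have hNam : MeasurableSet Na :=
        ((measurable_pi_lambda _ fun b => measurable_pi_apply _)) (hM a)
      have hAa : A a = (fun ω (i : T) => f (i : ι) ω) ⁻¹' Na := rfl
      have hmemS : ∀ j ∈ s, ∀ b : κ j, ρ j b ∈ S := by
        intro j hj b
        simp only [hS, Finset.mem_biUnion]
        exact ⟨j, hj, by simp [hB]⟩
      set NS : Set ((i : S) → ℝ) :=
        ⋂ j, ⋂ (hj : j ∈ s), (fun g (b : κ j) => g ⟨ρ j b, hmemS j hj b⟩) ⁻¹' M j with hNS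
      have hNSm : MeasurableSet NS := by
        apply MeasurableSet.iInter; intro j
        apply MeasurableSet.iInter; intro hj
        exact ((measurable_pi_lambda _ fun b => measurable_pi_apply _)) (hM j)
      have hAS : (⋂ j ∈ s, A j) = (fun ω (i : S) => f (i : ι) ω) ⁻¹' NS := by
        rw [hNS]
        simp only [Set.preimage_iInter]
        rfl
      rw [Finset.set_biInter_insert, Set.inter_comm, hAS, hAa]
      rw [hIndepF.measure_inter_preimage_eq_mul _ _ hNSm hNam]
      rw [← hAS, ← hAa, ih, Finset.prod_insert ha]
      ring
  have h1 : (⋂ j, A j) = ⋂ j ∈ Finset.univ, A j := by simp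
  rw [h1, key Finset.univ]

lemma gauss_lb (d : ℕ) (hd : 2 ≤ d) {η : ℝ} (h0 : 0 < η) (h1 : η ≤ 1) :
    ENNReal.ofReal (η / 4) ≤ gaussianReal 0 ((d : ℝ≥0) / ((d : ℝ≥0) - 1)) (Set.Ioo (-η) η) := by
  set v : ℝ≥0 := (d : ℝ≥0) / ((d : ℝ≥0) - 1) with hv
  have hd1 : (1:ℝ≥0) ≤ (d : ℝ≥0) := by
    norm_cast; omega
  have hvfact : ((d : ℝ≥0) - 1 : ℝ≥0) ≠ 0 := by
    intro h
    have : (d:ℝ≥0) ≤ 1 := tsub_eq_zero_iff_le.mp h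
    have : (d:ℕ) ≤ 1 := by exact_mod_cast this
    omega
  have hvne : v ≠ 0 := by
    rw [hv]
    apply div_ne_zero
    · norm_cast; omega
    · exact hvfact
  have hvR : (v : ℝ) = (d : ℝ) / ((d : ℝ) - 1) := by
    rw [hv, NNReal.coe_div, NNReal.coe_sub hd1]
    norm_num
  have hdR : (2:ℝ) ≤ (d:ℝ) := by norm_cast
  have hv1 : (1:ℝ) ≤ (v:ℝ) := by
    rw [hvR]
    rw [le_div_iff₀ (by linarith)]
    linarith
  have hv2 : (v:ℝ) ≤ 2 := by
    rw [hvR, div_le_iff₀ (by linarith)]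
    linarith
  rw [gaussianReal_apply_eq_integral _ hvne]
  apply ENNReal.ofReal_le_ofReal
  have hlow : ∀ x ∈ Set.Ioo (-η) η, (1/8 : ℝ) ≤ gaussianPDFReal 0 v x := by
    intro x hx
    rw [gaussianPDFReal]
    have hx2 : x^2 ≤ 1 := by
      rcases hx with ⟨hl, hr⟩
      nlinarith
    have hsq : Real.sqrt (2 * Real.pi * (v:ℝ)) ≤ 4 := by
      have h16 : 2 * Real.pi * (v:ℝ) ≤ 16 := by
        nlinarith [Real.pi_le_four, Real.pi_pos]
      calc Real.sqrt (2 * Real.pi * (v:ℝ)) ≤ Real.sqrt 16 := Real.sqrt_le_sqrt h16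
        _ = 4 := by
          rw [show (16:ℝ) = 4^2 by norm_num, Real.sqrt_sq (by norm_num)]
    have hsqpos : 0 < Real.sqrt (2 * Real.pi * (v:ℝ)) := by
      apply Real.sqrt_pos.mpr
      have := Real.pi_pos
      nlinarith
    have hinv : (1/4 : ℝ) ≤ (Real.sqrt (2 * Real.pi * (v:ℝ)))⁻¹ := by
      simpa [one_div] using one_div_le_one_div_of_le hsqpos hsq
    have hexp : (1/2 : ℝ) ≤ Real.exp (-(x - 0)^2 / (2 * (v:ℝ))) := by
      have harg : -(1/2 : ℝ) ≤ -(x - 0)^2 / (2 * (v:ℝ)) := by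
        rw [neg_div, neg_le_neg_iff, div_le_div_iff₀ (by linarith) (by norm_num)]
        ring_nf
        nlinarith
      have h2 : (1/2 : ℝ) ≤ Real.exp (-(1/2)) := by
        have := Real.add_one_le_exp (-(1/2) : ℝ)
        linarith
      exact h2.trans (Real.exp_le_exp.mpr harg)
    calc (1/8 : ℝ) = (1/4) * (1/2) := by norm_num
      _ ≤ (Real.sqrt (2 * Real.pi * (v:ℝ)))⁻¹ * Real.exp (-(x - 0)^2 / (2 * (v:ℝ))) := by
          apply mul_le_mul hinv hexp (by norm_num) (by positivity)
  calc η / 4 = (volume (Set.Ioo (-η) η)).toReal * (1/8 : ℝ) := by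
        rw [Real.volume_Ioo, ENNReal.toReal_ofReal (by linarith)]
        ring
    _ = ∫ _ in Set.Ioo (-η) η, (1/8 : ℝ) := by
        rw [setIntegral_const]
        simp
        rw [ENNReal.toReal_ofReal (by linarith), max_eq_left (by linarith)]
    _ ≤ ∫ x in Set.Ioo (-η) η, gaussianPDFReal 0 v x := by
        apply setIntegral_mono_on
        · exact integrableOn_const
            (by rw [Real.volume_Ioo]; exact ENNReal.ofReal_ne_top)
        · exact (integrable_gaussianPDFReal 0 v).integrableOn
        · exact measurableSet_Ioo
        · exact hlow

end

set_option maxHeartbeats 1600000 in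
/-- Submultiplicativity: for every `x ≥ 0` and `ε > 0` there are `ε̃ > 0` and
`c_{x,ε} > 0` such that for all `1 ≤ k₀ ≤ k`,
`P(H_k ∈ B(x,ε)) ≥ P(H_{k-k₀} ∈ B(x,ε̃))^{d^{k₀}} exp(-c_{x,ε} d^{k₀})`. -/
theorem stmt_9
    {Ω : Type} [MeasurableSpace Ω] (P : Measure Ω) [IsProbabilityMeasure P]
    (d : ℕ) (hd : 2 ≤ d)
    (γ : ℝ) (hγ0 : 0 < γ) (hγ : γ < Real.sqrt (2 * Real.log d))
    (Z : List (Fin d) × Fin d → Ω → ℝ)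
    (hZmeas : ∀ e, Measurable (Z e))
    (hZindep : iIndepFun Z P)
    (hZgauss : ∀ e, P.map (Z e) = gaussianReal 0 ((d : ℝ≥0) / ((d : ℝ≥0) - 1)))
    (MA : Ω → ℝ) (hMAmeas : Measurable MA)
    (hMAnonneg : ∀ᵐ ω ∂P, 0 ≤ MA ω)
    (hMAlim : ∀ᵐ ω ∂P, Tendsto (fun n => MAn d γ Z n ω) atTop (nhds (MA ω)))
    (hMAmean : ∫ ω, MA ω ∂P = 1)
    (hMAmom : ∀ θ : ℝ, 0 < θ → Integrable (fun ω => MA ω ^ (-θ)) P)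
    (lam : ℝ) (hlam : 0 < lam) :
    ∀ x : ℝ, 0 ≤ x → ∀ ε : ℝ, 0 < ε →
      ∃ εt : ℝ, 0 < εt ∧ ∃ c : ℝ, 0 < c ∧
        ∀ k k₀ : ℕ, 1 ≤ k₀ → k₀ ≤ k →
          (P {ω | Hk P d γ lam Z MA (k - k₀) ω ∈ Set.Ioo (x - εt) (x + εt)}).toReal ^ (d ^ k₀) *
              Real.exp (-c * (d : ℝ) ^ k₀)
            ≤ (P {ω | Hk P d γ lam Z MA k ω ∈ Set.Ioo (x - ε) (x + ε)}).toReal := by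
  classical
  intro x hx ε hε
  have hGnn : ∀ y, 0 ≤ Gfun P MA lam γ y := Gfun_nonneg P MA hMAmeas hMAnonneg hlam
  have hGmono : Monotone (Gfun P MA lam γ) := Gfun_mono P MA hMAmeas hMAnonneg hlam hγ0
  have hGmeas : Measurable (Gfun P MA lam γ) :=
    Gfun_measurable P MA hMAmeas hMAnonneg hlam hγ0
  have hGkey : ∀ (y δ' : ℝ), 0 ≤ δ' →
      Gfun P MA lam γ (y + δ') ≤ Real.exp (γ * δ') * Gfun P MA lam γ y :=
    fun y δ' h => Gfun_key P MA hMAmeas hMAnonneg hlam hγ0 h y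
  have hxε : (0:ℝ) < x + ε := by linarith
  set r : ℝ := ε / (2 * (x + ε)) with hrdef
  have hr : 0 < r := by positivity
  have hrx : r * (x + ε) = ε / 2 := by
    rw [hrdef]; field_simp
  have hlog1r : 0 < Real.log (1 + r) := Real.log_pos (by linarith)
  set δ : ℝ := min ((1/γ) * Real.log (1 + r)) 1 with hδdef
  have hδpos : 0 < δ := lt_min (by positivity) one_pos
  have hδ1 : δ ≤ 1 := min_le_right _ _
  have hEpos : (0:ℝ) < Real.exp (γ * δ) := Real.exp_pos _
  have hE1 : 1 ≤ Real.exp (γ * δ) := Real.one_le_exp (by positivity)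
  have hexpγδ : Real.exp (γ * δ) ≤ 1 + r := by
    have h1 : δ ≤ (1/γ) * Real.log (1 + r) := min_le_left _ _
    have h2 : γ * δ ≤ Real.log (1 + r) := by
      calc γ * δ ≤ γ * ((1/γ) * Real.log (1+r)) := by
            apply mul_le_mul_of_nonneg_left h1 hγ0.le
        _ = Real.log (1+r) := by field_simp
    calc Real.exp (γ*δ) ≤ Real.exp (Real.log (1+r)) := Real.exp_le_exp.mpr h2
      _ = 1 + r := Real.exp_log (by linarith)
  have hlog8δ : 0 ≤ Real.log (8 / δ) := Real.log_nonneg (by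
    rw [le_div_iff₀ hδpos]; linarith)
  set c : ℝ := 6 * Real.log (8 / δ) + 1 with hcdef
  have hc : 0 < c := by rw [hcdef]; linarith
  refine ⟨ε/4, by linarith, c, hc, ?_⟩
  intro k k₀ hk₀1 hk₀k
  set m : ℕ := k - k₀ with hmdef
  have hkm : k₀ + m = k := Nat.add_sub_cancel' hk₀k
  have hd0 : (0:ℝ) < (d:ℝ) := by
    have : 0 < d := by omega
    exact_mod_cast this
  set η : Fin k₀ → ℝ := fun i => δ * ((2:ℝ)⁻¹)^((k₀ - (i:ℕ)) + 1) with hηdef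
  have hηpos : ∀ i, 0 < η i := by intro i; rw [hηdef]; positivity
  have hη1 : ∀ i, η i ≤ 1 := by
    intro i
    rw [hηdef]
    calc δ * ((2:ℝ)⁻¹)^((k₀ - (i:ℕ))+1) ≤ 1 * 1 :=
        mul_le_mul hδ1 (pow_le_one₀ (by norm_num) (by norm_num)) (by positivity) one_pos.le
      _ = 1 := by ring
  -- the measurable target set for the generation-m functional
  set Mset : Set (myBase d m → ℝ) :=
    {g | (1 / (d:ℝ)^m) * ∑ w : Fin m → Fin d, Gfun P MA lam γ (AbalT d m g w)
        ∈ Set.Ioo (x - ε/4) (x + ε/4)} with hMdef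
  have hAbalTmeas : ∀ w : Fin m → Fin d,
      Measurable (fun g : myBase d m → ℝ => AbalT d m g w) := by
    intro w
    unfold AbalT
    apply Finset.measurable_sum
    intro i _
    apply Measurable.sub
    · exact measurable_pi_apply _
    · have hsum : Measurable (fun g : myBase d m → ℝ =>
          ∑ jj : Fin d, g (⟨i, fun j => w ⟨j, lt_trans j.2 i.2⟩⟩, jj)) :=
        Finset.measurable_sum _ (fun jj _ => measurable_pi_apply _)
      exact hsum.const_mul _
  have hMsetMeas : MeasurableSet Mset := by
    have hm : Measurable (fun g : myBase d m → ℝ =>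
        (1 / (d:ℝ)^m) * ∑ w : Fin m → Fin d, Gfun P MA lam γ (AbalT d m g w)) := by
      apply Measurable.const_mul
      apply Finset.measurable_sum
      intro w _
      exact hGmeas.comp (hAbalTmeas w)
    exact hm measurableSet_Ioo
  -- events
  set Fev : Set Ω := ⋂ b : myBase d k₀,
      Z (emb d k₀ List.nil b) ⁻¹' Set.Ioo (-(η b.1.1)) (η b.1.1) with hFevdef
  set Eev : (Fin k₀ → Fin d) → Set Ω :=
    fun u => {ω | (fun b : myBase d m => Z (emb d m (List.ofFn u) b) ω) ∈ Mset} with hEevdef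
  -- Step 1: decomposition of Hk at generation k
  have hdecomp : ∀ ω, Hk P d γ lam Z MA k ω
      = (1/(d:ℝ)^k₀) * ∑ u : Fin k₀ → Fin d, ((1/(d:ℝ)^m) * ∑ w : Fin m → Fin d,
          Gfun P MA lam γ (Abal d Z (List.ofFn u) ω
            + AbalT d m (fun b => Z (emb d m (List.ofFn u) b) ω) w)) := by
    intro ω
    unfold Hk
    rw [sum_join hkm (fun v => Gfun P MA lam γ (Abal d Z (List.ofFn v) ω))]
    have hterm : ∀ (u : Fin k₀ → Fin d) (w : Fin m → Fin d),
        Abal d Z (List.ofFn (joinFn hkm u w)) ω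
        = Abal d Z (List.ofFn u) ω
          + AbalT d m (fun b => Z (emb d m (List.ofFn u) b) ω) w := by
      intro u w
      rw [ofFn_joinFn, Abal_append,
        Abal_eq_AbalT d m (fun e => Z (List.ofFn u ++ e.1, e.2)) ω w]
      rfl
    rw [Finset.sum_congr rfl
      (fun u _ => Finset.sum_congr rfl (fun w _ => by rw [hterm u w]))]
    rw [Finset.mul_sum, Finset.mul_sum]
    apply Finset.sum_congr rfl
    intro u _
    rw [← mul_assoc]
    congr 1
    rw [← hkm, pow_add, div_mul_div_comm, one_mul]
  -- Step 2: the inclusion of events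
  have hsubset : (Fev ∩ ⋂ u, Eev u)
      ⊆ {ω | Hk P d γ lam Z MA k ω ∈ Set.Ioo (x - ε) (x + ε)} := by
    rintro ω ⟨hF, hE⟩
    rw [hFevdef, Set.mem_iInter] at hF
    rw [Set.mem_iInter] at hE
    have hHu : ∀ u : Fin k₀ → Fin d, (1 / (d:ℝ)^m) * ∑ w : Fin m → Fin d,
        Gfun P MA lam γ (AbalT d m (fun b => Z (emb d m (List.ofFn u) b) ω) w)
          ∈ Set.Ioo (x - ε/4) (x + ε/4) := by
      intro u
      have := hE u
      rw [hEevdef] at this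
      exact this
    have htri : ∀ a b : ℝ, |a - b| ≤ |a| + |b| := by
      intro a b
      calc |a - b| = |a + (-b)| := by rw [sub_eq_add_neg]
        _ ≤ |a| + |(-b)| := abs_add_le _ _
        _ = |a| + |b| := by rw [abs_neg]
    have hAu : ∀ u : Fin k₀ → Fin d, |Abal d Z (List.ofFn u) ω| ≤ δ := by
      intro u
      have hYb : ∀ i : Fin (List.ofFn u).length,
          |Ybal d Z ((List.ofFn u).take (i:ℕ)) ((List.ofFn u).get i) ω|
            ≤ 2 * η ⟨(i:ℕ), by simpa using i.2⟩ := by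
        intro i
        set i' : Fin k₀ := ⟨(i:ℕ), by simpa using i.2⟩ with hi'def
        have htk : (List.ofFn u).take (i:ℕ)
            = List.ofFn (fun jj : Fin ((i':ℕ)) => u ⟨jj, lt_trans jj.2 i'.2⟩) := ofFn_take u i'
        have hZb : ∀ j : Fin d, |Z ((List.ofFn u).take (i:ℕ), j) ω| ≤ η i' := by
          intro j
          have hmem := hF ((⟨i', fun jj => u ⟨jj, lt_trans jj.2 i'.2⟩⟩, j) : myBase d k₀)
          rw [Set.mem_preimage, Set.mem_Ioo] at hmem
          rw [htk]
          exact (abs_lt.mpr ⟨hmem.1, hmem.2⟩).le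
        have habs : |∑ j : Fin d, Z ((List.ofFn u).take (i:ℕ), j) ω| ≤ (d:ℝ) * η i' := by
          calc |∑ j : Fin d, Z ((List.ofFn u).take (i:ℕ), j) ω|
              ≤ ∑ j : Fin d, |Z ((List.ofFn u).take (i:ℕ), j) ω| :=
                Finset.abs_sum_le_sum_abs _ _
            _ ≤ ∑ _j : Fin d, η i' := Finset.sum_le_sum (fun j _ => hZb j)
            _ = (d:ℝ) * η i' := by
                rw [Finset.sum_const, Finset.card_univ, Fintype.card_fin, nsmul_eq_mul]
        unfold Ybal
        calc |Z ((List.ofFn u).take (i:ℕ), (List.ofFn u).get i) ω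
              - 1 / (d:ℝ) * ∑ j : Fin d, Z ((List.ofFn u).take (i:ℕ), j) ω|
            ≤ |Z ((List.ofFn u).take (i:ℕ), (List.ofFn u).get i) ω|
              + |1 / (d:ℝ) * ∑ j : Fin d, Z ((List.ofFn u).take (i:ℕ), j) ω| := htri _ _
          _ ≤ η i' + 1/(d:ℝ) * ((d:ℝ) * η i') := by
              apply add_le_add (hZb _)
              rw [abs_mul, abs_of_pos (by positivity : (0:ℝ) < 1/(d:ℝ))]
              exact mul_le_mul_of_nonneg_left habs (by positivity)
          _ = 2 * η i' := by field_simp; ring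
      calc |Abal d Z (List.ofFn u) ω|
          ≤ ∑ i : Fin (List.ofFn u).length,
              |Ybal d Z ((List.ofFn u).take (i:ℕ)) ((List.ofFn u).get i) ω| := by
            unfold Abal
            exact Finset.abs_sum_le_sum_abs _ _
        _ ≤ ∑ i : Fin (List.ofFn u).length, 2 * η ⟨(i:ℕ), by simpa using i.2⟩ :=
            Finset.sum_le_sum (fun i _ => hYb i)
        _ = ∑ i' : Fin k₀, 2 * η i' := by
            apply Fintype.sum_equiv (finCongr (List.length_ofFn (f := u)))
            intro i
            rfl
        _ ≤ δ := by
            have hval : ∀ i' : Fin k₀, 2 * η i' = δ * ((2:ℝ)⁻¹)^(k₀ - (i':ℕ)) := by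
              intro i'
              simp only [hηdef]
              rw [pow_succ]
              ring
            rw [Finset.sum_congr rfl (fun i' _ => hval i')]
            rw [Fin.sum_univ_eq_sum_range (fun i => δ * ((2:ℝ)⁻¹)^(k₀ - i))]
            rw [← Finset.mul_sum]
            calc δ * ∑ i ∈ Finset.range k₀, ((2:ℝ)⁻¹)^(k₀ - i) ≤ δ * 1 :=
                mul_le_mul_of_nonneg_left (geo_le_one k₀) hδpos.le
              _ = δ := mul_one δ
    -- per-subtree bounds
    have hTu_ub : ∀ u : Fin k₀ → Fin d,
        (1/(d:ℝ)^m) * ∑ w : Fin m → Fin d,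
            Gfun P MA lam γ (Abal d Z (List.ofFn u) ω
              + AbalT d m (fun b => Z (emb d m (List.ofFn u) b) ω) w)
          ≤ Real.exp (γ * δ) * (x + ε/4) := by
      intro u
      have hAb := hAu u
      rw [abs_le] at hAb
      have hperw : ∀ w : Fin m → Fin d,
          Gfun P MA lam γ (Abal d Z (List.ofFn u) ω
            + AbalT d m (fun b => Z (emb d m (List.ofFn u) b) ω) w)
          ≤ Real.exp (γ * δ)
            * Gfun P MA lam γ (AbalT d m (fun b => Z (emb d m (List.ofFn u) b) ω) w) := by
        intro w
        calc Gfun P MA lam γ (Abal d Z (List.ofFn u) ω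
              + AbalT d m (fun b => Z (emb d m (List.ofFn u) b) ω) w)
            ≤ Gfun P MA lam γ
              (AbalT d m (fun b => Z (emb d m (List.ofFn u) b) ω) w + δ) :=
              hGmono (by linarith [hAb.2])
          _ ≤ Real.exp (γ * δ)
              * Gfun P MA lam γ (AbalT d m (fun b => Z (emb d m (List.ofFn u) b) ω) w) :=
              hGkey _ δ hδpos.le
      calc (1/(d:ℝ)^m) * ∑ w : Fin m → Fin d,
            Gfun P MA lam γ (Abal d Z (List.ofFn u) ω
              + AbalT d m (fun b => Z (emb d m (List.ofFn u) b) ω) w)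
          ≤ (1/(d:ℝ)^m) * ∑ w : Fin m → Fin d, Real.exp (γ * δ)
              * Gfun P MA lam γ (AbalT d m (fun b => Z (emb d m (List.ofFn u) b) ω) w) := by
            apply mul_le_mul_of_nonneg_left
              (Finset.sum_le_sum fun w _ => hperw w) (by positivity)
        _ = Real.exp (γ * δ) * ((1/(d:ℝ)^m) * ∑ w : Fin m → Fin d,
              Gfun P MA lam γ (AbalT d m (fun b => Z (emb d m (List.ofFn u) b) ω) w)) := by
            rw [← Finset.mul_sum]
            ring
        _ ≤ Real.exp (γ * δ) * (x + ε/4) :=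
            mul_le_mul_of_nonneg_left (le_of_lt (hHu u).2) hEpos.le
    have hTu_lb : ∀ u : Fin k₀ → Fin d,
        (Real.exp (γ * δ))⁻¹ * (x - ε/4)
          ≤ (1/(d:ℝ)^m) * ∑ w : Fin m → Fin d,
            Gfun P MA lam γ (Abal d Z (List.ofFn u) ω
              + AbalT d m (fun b => Z (emb d m (List.ofFn u) b) ω) w) := by
      intro u
      have hAb := hAu u
      rw [abs_le] at hAb
      have hperw : ∀ w : Fin m → Fin d,
          (Real.exp (γ * δ))⁻¹
            * Gfun P MA lam γ (AbalT d m (fun b => Z (emb d m (List.ofFn u) b) ω) w)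
          ≤ Gfun P MA lam γ (Abal d Z (List.ofFn u) ω
              + AbalT d m (fun b => Z (emb d m (List.ofFn u) b) ω) w) := by
        intro w
        set T := AbalT d m (fun b => Z (emb d m (List.ofFn u) b) ω) w with hT
        have h1 : Gfun P MA lam γ T ≤ Real.exp (γ * δ) * Gfun P MA lam γ (T - δ) := by
          have := hGkey (T - δ) δ hδpos.le
          rwa [sub_add_cancel] at this
        have h2 : (Real.exp (γ * δ))⁻¹ * Gfun P MA lam γ T ≤ Gfun P MA lam γ (T - δ) :=
          (inv_mul_le_iff₀ hEpos).mpr h1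
        calc (Real.exp (γ * δ))⁻¹ * Gfun P MA lam γ T
            ≤ Gfun P MA lam γ (T - δ) := h2
          _ ≤ Gfun P MA lam γ (Abal d Z (List.ofFn u) ω + T) :=
              hGmono (by linarith [hAb.1])
      calc (Real.exp (γ * δ))⁻¹ * (x - ε/4)
          ≤ (Real.exp (γ * δ))⁻¹ * ((1/(d:ℝ)^m) * ∑ w : Fin m → Fin d,
              Gfun P MA lam γ (AbalT d m (fun b => Z (emb d m (List.ofFn u) b) ω) w)) :=
            mul_le_mul_of_nonneg_left (le_of_lt (hHu u).1) (by positivity)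
        _ = (1/(d:ℝ)^m) * ∑ w : Fin m → Fin d, (Real.exp (γ * δ))⁻¹
              * Gfun P MA lam γ (AbalT d m (fun b => Z (emb d m (List.ofFn u) b) ω) w) := by
            rw [← Finset.mul_sum]
            ring
        _ ≤ (1/(d:ℝ)^m) * ∑ w : Fin m → Fin d,
              Gfun P MA lam γ (Abal d Z (List.ofFn u) ω
                + AbalT d m (fun b => Z (emb d m (List.ofFn u) b) ω) w) := by
            apply mul_le_mul_of_nonneg_left
              (Finset.sum_le_sum fun w _ => hperw w) (by positivity)
    -- average over u
    have hcardfun : (Fintype.card (Fin k₀ → Fin d) : ℝ) = (d:ℝ)^k₀ := by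
      rw [Fintype.card_fun]
      push_cast
      simp
    have hHkub : Hk P d γ lam Z MA k ω ≤ Real.exp (γ * δ) * (x + ε/4) := by
      rw [hdecomp ω]
      calc (1/(d:ℝ)^k₀) * ∑ u : Fin k₀ → Fin d, ((1/(d:ℝ)^m) * ∑ w : Fin m → Fin d,
            Gfun P MA lam γ (Abal d Z (List.ofFn u) ω
              + AbalT d m (fun b => Z (emb d m (List.ofFn u) b) ω) w))
          ≤ (1/(d:ℝ)^k₀) * ∑ _u : Fin k₀ → Fin d, Real.exp (γ * δ) * (x + ε/4) := by
            apply mul_le_mul_of_nonneg_left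
              (Finset.sum_le_sum fun u _ => hTu_ub u) (by positivity)
        _ = Real.exp (γ * δ) * (x + ε/4) := by
            rw [Finset.sum_const, Finset.card_univ, nsmul_eq_mul, ← mul_assoc]
            rw [show (1/(d:ℝ)^k₀) * (Fintype.card (Fin k₀ → Fin d) : ℝ) = 1 by
              rw [hcardfun]; field_simp]
            ring
    have hHklb : (Real.exp (γ * δ))⁻¹ * (x - ε/4) ≤ Hk P d γ lam Z MA k ω := by
      rw [hdecomp ω]
      calc (Real.exp (γ * δ))⁻¹ * (x - ε/4)
          = (1/(d:ℝ)^k₀) * ∑ _u : Fin k₀ → Fin d, (Real.exp (γ * δ))⁻¹ * (x - ε/4) := by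
            rw [Finset.sum_const, Finset.card_univ, nsmul_eq_mul, ← mul_assoc]
            rw [show (1/(d:ℝ)^k₀) * (Fintype.card (Fin k₀ → Fin d) : ℝ) = 1 by
              rw [hcardfun]; field_simp]
            ring
        _ ≤ (1/(d:ℝ)^k₀) * ∑ u : Fin k₀ → Fin d, ((1/(d:ℝ)^m) * ∑ w : Fin m → Fin d,
            Gfun P MA lam γ (Abal d Z (List.ofFn u) ω
              + AbalT d m (fun b => Z (emb d m (List.ofFn u) b) ω) w)) := by
            apply mul_le_mul_of_nonneg_left
              (Finset.sum_le_sum fun u _ => hTu_lb u) (by positivity)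
    -- numeric conclusion
    have hnum1 : Real.exp (γ * δ) * (x + ε/4) < x + ε := by
      have h3 : Real.exp (γ * δ) * (x + ε/4) ≤ (1 + r) * (x + ε/4) :=
        mul_le_mul_of_nonneg_right hexpγδ (by linarith)
      nlinarith [mul_pos hr hε]
    have hnum2 : Real.exp (γ * δ) * (x - ε) < x - ε/4 := by
      have h1 : (Real.exp (γ * δ) - 1) * (x - ε) ≤ (Real.exp (γ * δ) - 1) * (x + ε) :=
        mul_le_mul_of_nonneg_left (by linarith) (by linarith)
      have h2 : (Real.exp (γ * δ) - 1) * (x + ε) ≤ r * (x + ε) :=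
        mul_le_mul_of_nonneg_right (by linarith) (by linarith)
      nlinarith
    constructor
    · -- lower
      have hlt : x - ε < (Real.exp (γ * δ))⁻¹ * (x - ε/4) := by
        rw [inv_mul_eq_div, lt_div_iff₀ hEpos]
        nlinarith [hnum2]
      linarith [hHklb]
    · linarith [hHkub, hnum1]
  -- Step 3: independence split between Fev and the subtree events
  have hsplit : P (Fev ∩ ⋂ u, Eev u) = P Fev * P (⋂ u, Eev u) := by
    set SF : Finset (List (Fin d) × Fin d) := Finset.univ.image (emb d k₀ List.nil) with hSF
    set SE : Finset (List (Fin d) × Fin d) := Finset.univ.biUnion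
      (fun u : Fin k₀ → Fin d => Finset.univ.image (emb d m (List.ofFn u))) with hSE
    have hdisjFT : Disjoint SF SE := by
      rw [Finset.disjoint_left]
      intro e heF heE
      simp only [hSF, Finset.mem_image, Finset.mem_univ, true_and] at heF
      simp only [hSE, Finset.mem_biUnion, Finset.mem_image, Finset.mem_univ, true_and] at heE
      obtain ⟨b, rfl⟩ := heF
      obtain ⟨u, b', hb'⟩ := heE
      have h1 : (emb d m (List.ofFn u) b').1.length = k₀ + (b'.1.1 : ℕ) := by simp [emb]
      have h2 : (emb d k₀ List.nil b).1.length = (b.1.1 : ℕ) := by simp [emb]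
      rw [hb'] at h1
      have hlt := b.1.1.2
      omega
    have hmemSF : ∀ b : myBase d k₀, emb d k₀ List.nil b ∈ SF :=
      fun b => Finset.mem_image_of_mem _ (Finset.mem_univ b)
    have hmemSE : ∀ (u : Fin k₀ → Fin d) (b : myBase d m), emb d m (List.ofFn u) b ∈ SE :=
      fun u b => Finset.mem_biUnion.mpr ⟨u, Finset.mem_univ u,
        Finset.mem_image_of_mem _ (Finset.mem_univ b)⟩
    set NF : Set ((i : SF) → ℝ) := ⋂ b : myBase d k₀,
      (fun g : (i : SF) → ℝ => g ⟨emb d k₀ List.nil b, hmemSF b⟩)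
        ⁻¹' Set.Ioo (-(η b.1.1)) (η b.1.1) with hNF
    have hNFm : MeasurableSet NF :=
      MeasurableSet.iInter fun b => (measurable_pi_apply _) measurableSet_Ioo
    set NE : Set ((i : SE) → ℝ) := ⋂ u : Fin k₀ → Fin d,
      (fun g (b : myBase d m) => g ⟨emb d m (List.ofFn u) b, hmemSE u b⟩) ⁻¹' Mset with hNE
    have hNEm : MeasurableSet NE := MeasurableSet.iInter fun u =>
      (measurable_pi_lambda _ fun b => measurable_pi_apply _) hMsetMeas
    have hFev2 : Fev = (fun ω (i : SF) => Z (i : List (Fin d) × Fin d) ω) ⁻¹' NF := by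
      rw [hFevdef, hNF]
      simp only [Set.preimage_iInter]
      rfl
    have hEev2 : (⋂ u, Eev u) = (fun ω (i : SE) => Z (i : List (Fin d) × Fin d) ω) ⁻¹' NE := by
      rw [hEevdef, hNE]
      simp only [Set.preimage_iInter]
      rfl
    rw [hFev2, hEev2]
    exact (hZindep.indepFun_finset SF SE hdisjFT hZmeas).measure_inter_preimage_eq_mul
      _ _ hNFm hNEm
  -- Step 4: subtree events are independent across u
  have hgroup : P (⋂ u, Eev u) = ∏ u : Fin k₀ → Fin d, P (Eev u) := by
    rw [hEevdef]
    apply meas_iInter_blocks P Z hZmeas hZindep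
      (fun u : Fin k₀ → Fin d => emb d m (List.ofFn u)) ?_ (fun _ => Mset) (fun _ => hMsetMeas)
    intro u u' huu' a b hab
    apply huu'
    have h1 : List.ofFn u ++ List.ofFn a.1.2 = List.ofFn u' ++ List.ofFn b.1.2 :=
      congrArg Prod.fst hab
    have h2 : List.ofFn u = List.ofFn u' := by
      have h3 := congrArg (List.take k₀) h1
      rwa [List.take_left' (List.length_ofFn (f := u)), List.take_left' (List.length_ofFn (f := u'))] at h3
    exact List.ofFn_injective h2
  -- Step 5: each subtree event has the law of the generation-m event
  have hlawT : ∀ (pre : List (Fin d)) (m' : ℕ),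
      P.map (fun ω (b : myBase d m') => Z (emb d m' pre b) ω)
        = Measure.pi (fun _ : myBase d m' => gaussianReal 0 ((d : ℝ≥0) / ((d : ℝ≥0) - 1))) :=
    fun pre m' => map_tuple_eq_pi P Z hZmeas hZindep _ hZgauss _ (emb_inj d m' pre)
  have hEuP : ∀ u : Fin k₀ → Fin d, P (Eev u)
      = Measure.pi (fun _ : myBase d m => gaussianReal 0 ((d : ℝ≥0) / ((d : ℝ≥0) - 1))) Mset := by
    intro u
    have hmeasT : Measurable (fun ω (b : myBase d m) => Z (emb d m (List.ofFn u) b) ω) :=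
      measurable_pi_lambda _ fun b => hZmeas _
    have hEpre : Eev u = (fun ω (b : myBase d m) => Z (emb d m (List.ofFn u) b) ω) ⁻¹' Mset :=
      rfl
    rw [hEpre, ← hlawT (List.ofFn u) m, Measure.map_apply hmeasT hMsetMeas]
  have hHmP : P {ω | Hk P d γ lam Z MA m ω ∈ Set.Ioo (x - ε/4) (x + ε/4)}
      = Measure.pi (fun _ : myBase d m => gaussianReal 0 ((d : ℝ≥0) / ((d : ℝ≥0) - 1))) Mset := by
    have hmeasT : Measurable (fun ω (b : myBase d m) => Z (emb d m List.nil b) ω) :=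
      measurable_pi_lambda _ fun b => hZmeas _
    have hHkEq : ∀ ω, Hk P d γ lam Z MA m ω
        = (1 / (d:ℝ)^m) * ∑ w : Fin m → Fin d,
            Gfun P MA lam γ (AbalT d m (fun b => Z (emb d m List.nil b) ω) w) := by
      intro ω
      have habal : ∀ w : Fin m → Fin d,
          Abal d Z (List.ofFn w) ω
            = AbalT d m (fun b => Z (emb d m List.nil b) ω) w :=
        fun w => Abal_eq_AbalT d m Z ω w
      unfold Hk
      simp only [habal]
    have hset : {ω | Hk P d γ lam Z MA m ω ∈ Set.Ioo (x - ε/4) (x + ε/4)}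
        = (fun ω (b : myBase d m) => Z (emb d m List.nil b) ω) ⁻¹' Mset := by
      ext ω
      rw [Set.mem_setOf_eq, Set.mem_preimage, hHkEq ω]
      exact Iff.rfl
    rw [hset, ← hlawT List.nil m, Measure.map_apply hmeasT hMsetMeas]
  have hEuHm : ∀ u : Fin k₀ → Fin d, P (Eev u)
      = P {ω | Hk P d γ lam Z MA m ω ∈ Set.Ioo (x - ε/4) (x + ε/4)} := by
    intro u
    rw [hEuP u, hHmP]
  -- Step 6: lower bound on P Fev
  have hFsingle : P Fev = ∏ b : myBase d k₀,
      P (Z (emb d k₀ List.nil b) ⁻¹' Set.Ioo (-(η b.1.1)) (η b.1.1)) := by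
    rw [hFevdef]
    exact meas_iInter_single P Z hZindep (emb d k₀ List.nil) (emb_inj d k₀ List.nil)
      (fun b => Set.Ioo (-(η b.1.1)) (η b.1.1)) (fun b => measurableSet_Ioo)
  have hfac : ∀ b : myBase d k₀,
      Real.exp (-((((k₀ - (b.1.1:ℕ) : ℕ):ℝ)) + 1) * Real.log (8/δ))
        ≤ (P (Z (emb d k₀ List.nil b) ⁻¹' Set.Ioo (-(η b.1.1)) (η b.1.1))).toReal := by
    intro b
    have hglb := gauss_lb d hd (hηpos b.1.1) (hη1 b.1.1)
    have hmap : P (Z (emb d k₀ List.nil b) ⁻¹' Set.Ioo (-(η b.1.1)) (η b.1.1))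
        = gaussianReal 0 ((d : ℝ≥0) / ((d : ℝ≥0) - 1)) (Set.Ioo (-(η b.1.1)) (η b.1.1)) := by
      rw [← hZgauss (emb d k₀ List.nil b), Measure.map_apply (hZmeas _) measurableSet_Ioo]
    rw [hmap]
    calc Real.exp (-((((k₀ - (b.1.1:ℕ):ℕ):ℝ)) + 1) * Real.log (8/δ))
        ≤ δ * ((2:ℝ)⁻¹)^((k₀ - (b.1.1:ℕ)) + 1)/4 := factor_lb hδpos hδ1 _
      _ = η b.1.1 / 4 := by rw [hηdef]
      _ ≤ _ := by
          have h5 := ENNReal.toReal_mono (measure_ne_top _ _) hglb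
          rwa [ENNReal.toReal_ofReal (by positivity)] at h5
  have hFlb : Real.exp (-c * (d:ℝ)^k₀) ≤ (P Fev).toReal := by
    rw [hFsingle, ENNReal.toReal_prod]
    have hsum := sum_depth_bound d k₀ hd
    calc Real.exp (-c * (d:ℝ)^k₀)
        ≤ Real.exp (∑ b : myBase d k₀,
            (-((((k₀ - (b.1.1:ℕ):ℕ):ℝ)) + 1) * Real.log (8/δ))) := by
          apply Real.exp_le_exp.mpr
          have heq : ∑ b : myBase d k₀,
              (-((((k₀ - (b.1.1:ℕ):ℕ):ℝ)) + 1) * Real.log (8/δ))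
              = -((∑ b : myBase d k₀, ((((k₀ - (b.1.1:ℕ):ℕ):ℝ)) + 1)) * Real.log (8/δ)) := by
            simp only [neg_mul]
            rw [Finset.sum_neg_distrib, ← Finset.sum_mul]
          rw [heq]
          have hD : (0:ℝ) ≤ (d:ℝ)^k₀ := by positivity
          have h1 : (∑ b : myBase d k₀, ((((k₀ - (b.1.1:ℕ):ℕ):ℝ)) + 1)) * Real.log (8/δ)
              ≤ (6*(d:ℝ)^k₀) * Real.log (8/δ) := mul_le_mul_of_nonneg_right hsum hlog8δ
          nlinarith [h1, hD]
      _ = ∏ b : myBase d k₀,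
            Real.exp (-((((k₀ - (b.1.1:ℕ):ℕ):ℝ)) + 1) * Real.log (8/δ)) := Real.exp_sum _ _
      _ ≤ ∏ b : myBase d k₀,
            (P (Z (emb d k₀ List.nil b) ⁻¹' Set.Ioo (-(η b.1.1)) (η b.1.1))).toReal :=
          Finset.prod_le_prod (fun b _ => Real.exp_nonneg _) (fun b _ => hfac b)
  -- Step 7: conclusion
  have hcardfun : Fintype.card (Fin k₀ → Fin d) = d ^ k₀ := by
    rw [Fintype.card_fun]
    simp
  have hprodE : ∏ u : Fin k₀ → Fin d, P (Eev u)
      = P {ω | Hk P d γ lam Z MA m ω ∈ Set.Ioo (x - ε/4) (x + ε/4)} ^ (d ^ k₀) := by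
    rw [Finset.prod_congr rfl (fun u _ => hEuHm u), Finset.prod_const, Finset.card_univ,
      hcardfun]
  have hchain : P Fev * P {ω | Hk P d γ lam Z MA m ω ∈ Set.Ioo (x - ε/4) (x + ε/4)} ^ (d^k₀)
      ≤ P {ω | Hk P d γ lam Z MA k ω ∈ Set.Ioo (x - ε) (x + ε)} := by
    rw [← hprodE, ← hgroup, ← hsplit]
    exact measure_mono hsubset
  calc (P {ω | Hk P d γ lam Z MA m ω ∈ Set.Ioo (x - ε/4) (x + ε/4)}).toReal ^ (d^k₀)
        * Real.exp (-c * (d:ℝ)^k₀)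
      ≤ (P {ω | Hk P d γ lam Z MA m ω ∈ Set.Ioo (x - ε/4) (x + ε/4)}).toReal ^ (d^k₀)
          * (P Fev).toReal :=
        mul_le_mul_of_nonneg_left hFlb (pow_nonneg ENNReal.toReal_nonneg _)
    _ = (P Fev
          * P {ω | Hk P d γ lam Z MA m ω ∈ Set.Ioo (x - ε/4) (x + ε/4)} ^ (d^k₀)).toReal := by
        rw [ENNReal.toReal_mul, ENNReal.toReal_pow]
        ring
    _ ≤ (P {ω | Hk P d γ lam Z MA k ω ∈ Set.Ioo (x - ε) (x + ε)}).toReal :=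
        ENNReal.toReal_mono (measure_ne_top _ _) hchain
end

section
/- For every x ≥ 0 and ε > 0 there exists ε̃ > 0 such that liminf_{k→∞} d^{−k}·log P( H_k ∈ B(x,ε) ) ≥ limsup_{k→∞} d^{−k}·log P( H_k ∈ B(x,ε̃) ). -/
open MeasureTheory ProbabilityTheory Filter
open scoped NNReal ENNReal

noncomputable section

/-- `d^{-k} · log P(H_k ∈ A)`, as an extended real number (`log 0 = ⊥`). -/
def lpr {Ω : Type} [MeasurableSpace Ω] (P : Measure Ω) (d : ℕ) (γ lam : ℝ)
    (Z : List (Fin d) × Fin d → Ω → ℝ) (MA : Ω → ℝ) (k : ℕ) (A : Set ℝ) : EReal :=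
  ((1 / (d : ℝ) ^ k : ℝ) : EReal) * ENNReal.log (P {ω | Hk P d γ lam Z MA k ω ∈ A})

end

namespace S10

noncomputable section

variable {Ω : Type} [MeasurableSpace Ω] (P : Measure Ω) [IsProbabilityMeasure P]
  (MA : Ω → ℝ)

/-- Laplace-type functional. -/
def Lap (c : ℝ) : ℝ := ∫ ω, Real.exp (-c * MA ω) ∂P

variable {P MA}

section LapFacts

variable (hMAmeas : Measurable MA) (hMAnonneg : ∀ᵐ ω ∂P, 0 ≤ MA ω)

include hMAmeas in
lemma lap_integrable {c : ℝ} (hc : 0 ≤ c) (hMAnonneg : ∀ᵐ ω ∂P, 0 ≤ MA ω) :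
    Integrable (fun ω => Real.exp (-c * MA ω)) P := by
  refine Integrable.mono' (integrable_const (1 : ℝ))
    ((Real.measurable_exp.comp (hMAmeas.const_mul (-c))).aestronglyMeasurable) ?_
  filter_upwards [hMAnonneg] with ω hω
  rw [Real.norm_eq_abs, abs_of_pos (Real.exp_pos _)]
  refine Real.exp_le_one_iff.2 ?_
  have : 0 ≤ c * MA ω := mul_nonneg hc hω
  nlinarith

include hMAmeas hMAnonneg in
lemma lap_pos {c : ℝ} (hc : 0 ≤ c) : 0 < Lap P MA c := by
  have hint := lap_integrable hMAmeas hc hMAnonneg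
  rw [Lap]
  rw [integral_pos_iff_support_of_nonneg_ae (Eventually.of_forall fun ω => (Real.exp_pos _).le) hint]
  have : (Function.support fun ω => Real.exp (-c * MA ω)) = Set.univ := by
    ext ω; simp [Function.mem_support, (Real.exp_pos _).ne']
  rw [this]
  simp

include hMAmeas hMAnonneg in
lemma lap_le_one {c : ℝ} (hc : 0 ≤ c) : Lap P MA c ≤ 1 := by
  have hint := lap_integrable hMAmeas hc hMAnonneg
  have h1 : ∫ _ω, (1 : ℝ) ∂P = 1 := by simp
  rw [Lap, ← h1]
  refine integral_mono_ae hint (integrable_const _) ?_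
  filter_upwards [hMAnonneg] with ω hω
  refine Real.exp_le_one_iff.2 ?_
  have : 0 ≤ c * MA ω := mul_nonneg hc hω
  nlinarith

include hMAmeas hMAnonneg in
lemma lap_anti {c c' : ℝ} (hc : 0 ≤ c) (hcc : c ≤ c') : Lap P MA c' ≤ Lap P MA c := by
  refine integral_mono_ae (lap_integrable hMAmeas (hc.trans hcc) hMAnonneg)
    (lap_integrable hMAmeas hc hMAnonneg) ?_
  filter_upwards [hMAnonneg] with ω hω
  exact Real.exp_le_exp.2 (by nlinarith)

include hMAmeas hMAnonneg in
/-- Hölder/Jensen: `Lap a ≤ (Lap b) ^ (a/b)` for `0 < a ≤ b`. -/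
lemma lap_rpow {a b : ℝ} (ha : 0 < a) (hab : a ≤ b) :
    Lap P MA a ≤ (Lap P MA b) ^ (a / b) := by
  have hb : 0 < b := ha.trans_le hab
  set t : ℝ := a / b with ht_def
  have ht0 : 0 < t := div_pos ha hb
  have ht1 : t ≤ 1 := (div_le_one hb).2 hab
  have hconc : ConcaveOn ℝ (Set.Ici 0) (fun x : ℝ => x ^ t) :=
    Real.concaveOn_rpow ht0.le ht1
  have hcont : ContinuousOn (fun x : ℝ => x ^ t) (Set.Ici 0) := by
    refine ContinuousOn.rpow_const continuousOn_id ?_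
    intro x _
    exact Or.inr ht0.le
  have hfi : Integrable (fun ω => Real.exp (-b * MA ω)) P :=
    lap_integrable hMAmeas hb.le hMAnonneg
  have hgi : Integrable (fun ω => (Real.exp (-b * MA ω)) ^ t) P := by
    have : (fun ω => (Real.exp (-b * MA ω)) ^ t) = fun ω => Real.exp (-a * MA ω) := by
      funext ω
      rw [← Real.exp_mul]
      congr 1
      field_simp [ht_def]
      rw [ht_def]; field_simp
    rw [this]
    exact lap_integrable hMAmeas ha.le hMAnonneg
  have hjen := hconc.le_map_integral hcont isClosed_Ici
    (Eventually.of_forall fun ω => (Real.exp_pos _).le) hfi hgi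
  have heq : ∫ ω, (Real.exp (-b * MA ω)) ^ t ∂P = Lap P MA a := by
    rw [Lap]
    congr 1
    funext ω
    rw [← Real.exp_mul]
    congr 1
    field_simp [ht_def]
    rw [ht_def]; field_simp
  calc Lap P MA a = ∫ ω, (Real.exp (-b * MA ω)) ^ t ∂P := heq.symm
    _ ≤ (∫ ω, Real.exp (-b * MA ω) ∂P) ^ t := hjen
    _ = (Lap P MA b) ^ t := rfl

end LapFacts

end

end S10

set_option linter.unusedSectionVars false

namespace S10

noncomputable section

variable {Ω : Type} [MeasurableSpace Ω] {P : Measure Ω} [IsProbabilityMeasure P]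
  {MA : Ω → ℝ} {lam γ : ℝ}

section GFacts

variable (hMAmeas : Measurable MA) (hMAnonneg : ∀ᵐ ω ∂P, 0 ≤ MA ω)
  (hlam : 0 < lam) (hγ : 0 < γ)

lemma gfun_eq (x : ℝ) : Gfun P MA lam γ x = -Real.log (Lap P MA (lam * Real.exp (γ * x))) := rfl

include hlam in
lemma cpos (x : ℝ) : 0 < lam * Real.exp (γ * x) := mul_pos hlam (Real.exp_pos _)

include hMAmeas hMAnonneg hlam in
lemma gfun_nonneg (x : ℝ) : 0 ≤ Gfun P MA lam γ x := by
  rw [gfun_eq, neg_nonneg]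
  exact Real.log_nonpos (lap_pos hMAmeas hMAnonneg (cpos hlam x).le).le
    (lap_le_one hMAmeas hMAnonneg (cpos hlam x).le)

include hMAmeas hMAnonneg hlam hγ in
lemma gfun_mono {x y : ℝ} (hxy : x ≤ y) : Gfun P MA lam γ x ≤ Gfun P MA lam γ y := by
  rw [gfun_eq, gfun_eq, neg_le_neg_iff]
  refine Real.log_le_log (lap_pos hMAmeas hMAnonneg (cpos hlam y).le) ?_
  refine lap_anti hMAmeas hMAnonneg (cpos hlam x).le ?_
  have := Real.exp_le_exp.2 (mul_le_mul_of_nonneg_left hxy hγ.le)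
  nlinarith [Real.exp_pos (γ * x)]

include hMAmeas hMAnonneg hlam hγ in
/-- Key log-concavity estimate: `G(y) ≤ exp (γ s) * G (y - s)` for `s ≥ 0`. -/
lemma gfun_shift {y s : ℝ} (hs : 0 ≤ s) :
    Gfun P MA lam γ y ≤ Real.exp (γ * s) * Gfun P MA lam γ (y - s) := by
  set a := lam * Real.exp (γ * (y - s)) with ha_def
  set b := lam * Real.exp (γ * y) with hb_def
  have ha : 0 < a := cpos hlam _
  have hb : 0 < b := cpos hlam _
  have hab : a ≤ b := by
    have : γ * (y - s) ≤ γ * y := by nlinarith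
    have := Real.exp_le_exp.2 this
    nlinarith
  have hq : a / b = Real.exp (-(γ * s)) := by
    rw [ha_def, hb_def, mul_div_mul_left _ _ hlam.ne', ← Real.exp_sub]
    congr 1
    ring
  have h5 := lap_rpow hMAmeas hMAnonneg ha (hab)
  have hlog := Real.log_le_log (lap_pos hMAmeas hMAnonneg ha.le) h5
  rw [Real.log_rpow (lap_pos hMAmeas hMAnonneg hb.le), hq] at hlog
  rw [gfun_eq, gfun_eq]
  have hE : 0 < Real.exp (γ * s) := Real.exp_pos _
  -- hlog : log (Lap a) ≤ exp (-(γ s)) * log (Lap b)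
  have h7 : -Real.log (Lap P MA b) ≤ Real.exp (γ * s) * -Real.log (Lap P MA a) := by
    have h8 : Real.exp (γ * s) * Real.log (Lap P MA a)
        ≤ Real.exp (γ * s) * (Real.exp (-(γ * s)) * Real.log (Lap P MA b)) :=
      mul_le_mul_of_nonneg_left hlog hE.le
    rw [← mul_assoc, ← Real.exp_add] at h8
    simp only [add_neg_cancel, Real.exp_zero, one_mul] at h8
    nlinarith
  exact h7

include hMAmeas hMAnonneg hlam in
lemma gfun_continuous : Continuous (Gfun P MA lam γ) := by
  have hL : Continuous (fun x : ℝ => Lap P MA (lam * Real.exp (γ * x))) := by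
    rw [continuous_iff_continuousAt]
    intro x₀
    refine continuousAt_of_dominated (F := fun (x : ℝ) (ω : Ω) =>
        Real.exp (-(lam * Real.exp (γ * x)) * MA ω)) (bound := fun _ => (1 : ℝ)) ?_ ?_
        (integrable_const _) ?_
    · exact Eventually.of_forall fun x =>
        ((Real.measurable_exp.comp (hMAmeas.const_mul _)).aestronglyMeasurable)
    · refine Eventually.of_forall fun x => ?_
      filter_upwards [hMAnonneg] with ω hω
      rw [Real.norm_eq_abs, abs_of_pos (Real.exp_pos _)]
      refine Real.exp_le_one_iff.2 ?_
      have h1 : 0 < lam * Real.exp (γ * x) := cpos hlam x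
      nlinarith
    · filter_upwards [] with ω
      fun_prop
  rw [continuous_iff_continuousAt]
  intro x₀
  have hpos : Lap P MA (lam * Real.exp (γ * x₀)) ≠ 0 :=
    (lap_pos hMAmeas hMAnonneg (cpos hlam x₀).le).ne'
  have : ContinuousAt (fun x : ℝ => Real.log (Lap P MA (lam * Real.exp (γ * x)))) x₀ :=
    (Real.continuousAt_log hpos).comp (f := fun x : ℝ => Lap P MA (lam * Real.exp (γ * x)))
      hL.continuousAt
  exact this.neg

include hMAmeas hMAnonneg hlam in
lemma gfun_measurable : Measurable (Gfun P MA lam γ) :=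
  (gfun_continuous hMAmeas hMAnonneg hlam).measurable

end GFacts

end

end S10

namespace S10

noncomputable section

/-- the field of the `i`-th subtree -/
def subZ {Ω : Type} (d : ℕ) (Z : List (Fin d) × Fin d → Ω → ℝ) (i : Fin d) :
    List (Fin d) × Fin d → Ω → ℝ := fun e => Z (i :: e.1, e.2)

/-- edge relabeling for the `i`-th subtree -/
def rel (d : ℕ) (i : Fin d) : List (Fin d) × Fin d → List (Fin d) × Fin d :=
  fun e => (i :: e.1, e.2)

lemma rel_injective (d : ℕ) (i : Fin d) : Function.Injective (rel d i) := by
  intro e e' h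
  rw [rel, rel, Prod.mk.injEq] at h
  exact Prod.ext (by simpa using h.1) h.2

lemma abal_cons {Ω : Type} (d : ℕ) (Z : List (Fin d) × Fin d → Ω → ℝ)
    (i : Fin d) (w : List (Fin d)) (ω : Ω) :
    Abal d Z (i :: w) ω = Ybal d Z List.nil i ω + Abal d (subZ d Z i) w ω := by
  show (∑ j : Fin (w.length + 1), Ybal d Z ((i :: w).take (j : ℕ)) ((i :: w).get j) ω) = _
  rw [Fin.sum_univ_succ]
  rfl

/-- `H`-type functional for an arbitrary increasing profile `G`, with spatial shift `s`. -/
def HsG {Ω : Type} (G : ℝ → ℝ) (d : ℕ) (Z : List (Fin d) × Fin d → Ω → ℝ)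
    (s : ℝ) (k : ℕ) (ω : Ω) : ℝ :=
  (1 / (d : ℝ) ^ k) * ∑ v : Fin k → Fin d, G (s + Abal d Z (List.ofFn v) ω)

lemma hsG_succ {Ω : Type} (G : ℝ → ℝ) (d : ℕ) (hd : 0 < d)
    (Z : List (Fin d) × Fin d → Ω → ℝ) (s : ℝ) (k : ℕ) (ω : Ω) :
    HsG G d Z s (k + 1) ω
      = (1 / (d : ℝ)) * ∑ i : Fin d, HsG G d (subZ d Z i) (s + Ybal d Z List.nil i ω) k ω := by
  have hsum : ∑ v : Fin (k + 1) → Fin d, G (s + Abal d Z (List.ofFn v) ω)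
      = ∑ i : Fin d, ∑ u : Fin k → Fin d,
          G ((s + Ybal d Z List.nil i ω) + Abal d (subZ d Z i) (List.ofFn u) ω) := by
    have h1 : ∑ v : Fin (k + 1) → Fin d, G (s + Abal d Z (List.ofFn v) ω)
        = ∑ p : Fin d × (Fin k → Fin d),
            G (s + Abal d Z (List.ofFn (Fin.cons p.1 p.2)) ω) := by
      refine (Fintype.sum_equiv (Fin.consEquiv (fun _ : Fin (k+1) => Fin d))
        (fun p => G (s + Abal d Z (List.ofFn (Fin.cons p.1 p.2)) ω))
        (fun v => G (s + Abal d Z (List.ofFn v) ω)) (fun p => rfl)).symm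
    rw [h1, Fintype.sum_prod_type]
    refine Finset.sum_congr rfl fun i _ => Finset.sum_congr rfl fun u _ => ?_
    congr 1
    have hofn : List.ofFn (Fin.cons (α := fun _ => Fin d) i u) = i :: List.ofFn u := by
      rw [List.ofFn_succ]
      simp
    rw [hofn, abal_cons]
    ring
  rw [HsG, hsum]
  have h2 : ∀ i : Fin d, HsG G d (subZ d Z i) (s + Ybal d Z List.nil i ω) k ω
      = (1 / (d : ℝ) ^ k) * ∑ u : Fin k → Fin d,
          G ((s + Ybal d Z List.nil i ω) + Abal d (subZ d Z i) (List.ofFn u) ω) := fun i => rfl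
  simp_rw [h2]
  rw [Finset.mul_sum, Finset.mul_sum]
  refine Finset.sum_congr rfl fun i _ => ?_
  rw [← mul_assoc, pow_succ]
  congr 1
  have hdR : ((d:ℝ)) ≠ 0 := by
    have h3 : (0:ℝ) < d := by exact_mod_cast hd
    exact h3.ne'
  field_simp

variable {Ω : Type} {G : ℝ → ℝ} {d : ℕ}

lemma hsG_mono_s (hG : Monotone G) (Z : List (Fin d) × Fin d → Ω → ℝ)
    {s s' : ℝ} (h : s ≤ s') (k : ℕ) (ω : Ω) :
    HsG G d Z s k ω ≤ HsG G d Z s' k ω := by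
  refine mul_le_mul_of_nonneg_left ?_ (by positivity)
  exact Finset.sum_le_sum fun v _ => hG (by linarith)

lemma hsG_nonneg (hG0 : ∀ y, 0 ≤ G y) (Z : List (Fin d) × Fin d → Ω → ℝ)
    (s : ℝ) (k : ℕ) (ω : Ω) : 0 ≤ HsG G d Z s k ω := by
  refine mul_nonneg (by positivity) (Finset.sum_nonneg fun v _ => hG0 _)

lemma hsG_shift {γ : ℝ} (hGs : ∀ y t : ℝ, 0 ≤ t → G y ≤ Real.exp (γ * t) * G (y - t))
    (Z : List (Fin d) × Fin d → Ω → ℝ) {s t : ℝ} (ht : 0 ≤ t) (k : ℕ) (ω : Ω) :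
    HsG G d Z s k ω ≤ Real.exp (γ * t) * HsG G d Z (s - t) k ω := by
  have h1 : HsG G d Z s k ω ≤ (1 / (d:ℝ) ^ k) * ∑ v : Fin k → Fin d,
      Real.exp (γ * t) * G (s - t + Abal d Z (List.ofFn v) ω) := by
    refine mul_le_mul_of_nonneg_left (Finset.sum_le_sum fun v _ => ?_) (by positivity)
    have h2 := hGs (s + Abal d Z (List.ofFn v) ω) t ht
    have h3 : s + Abal d Z (List.ofFn v) ω - t = s - t + Abal d Z (List.ofFn v) ω := by ring
    rwa [h3] at h2
  refine h1.trans_eq ?_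
  rw [← Finset.mul_sum, HsG, ← mul_assoc, mul_comm ((1:ℝ) / (d:ℝ) ^ k) (Real.exp (γ * t)),
    mul_assoc]

end

end S10

namespace S10

noncomputable section

open MeasureTheory

/-- Edge type of the `d`-ary tree. -/
abbrev Edge (d : ℕ) := List (Fin d) × Fin d

/-- canonical field on path space -/
def Zcan (d : ℕ) : Edge d → (Edge d → ℝ) → ℝ := fun e z => z e

/-- process map -/
def proc {Ω : Type} (d : ℕ) (Z : Edge d → Ω → ℝ) : Ω → (Edge d → ℝ) := fun ω e => Z e ω

lemma hsG_proc {Ω : Type} (G : ℝ → ℝ) (d : ℕ) (Z : Edge d → Ω → ℝ) (s : ℝ) (k : ℕ) (ω : Ω) :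
    HsG G d Z s k ω = HsG G d (Zcan d) s k (proc d Z ω) := rfl

lemma proc_subZ {Ω : Type} (d : ℕ) (Z : Edge d → Ω → ℝ) (i : Fin d) (ω : Ω) :
    proc d (subZ d Z i) ω = fun e => Z (rel d i e) ω := rfl

lemma measurable_proc {Ω : Type} [MeasurableSpace Ω] (d : ℕ) {Z : Edge d → Ω → ℝ}
    (hZmeas : ∀ e, Measurable (Z e)) : Measurable (proc d Z) :=
  measurable_pi_lambda _ fun e => hZmeas e

lemma measurable_abal_can (d : ℕ) (w : List (Fin d)) :
    Measurable (fun z : Edge d → ℝ => Abal d (Zcan d) w z) := by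
  unfold Abal
  refine Finset.measurable_sum _ fun i _ => ?_
  unfold Ybal Zcan
  have h1 : Measurable fun z : Edge d → ℝ => z (w.take (i : ℕ), w.get i) :=
    measurable_pi_apply _
  have h2 : Measurable fun z : Edge d → ℝ => ∑ j : Fin d, z (w.take (i : ℕ), j) :=
    Finset.measurable_sum _ fun j _ => measurable_pi_apply _
  exact h1.sub (h2.const_mul _)

lemma measurable_hsG_can {G : ℝ → ℝ} (hG : Measurable G) (d : ℕ) (s : ℝ) (k : ℕ) :
    Measurable (fun z : Edge d → ℝ => HsG G d (Zcan d) s k z) := by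
  unfold HsG
  refine Measurable.const_mul ?_ _
  refine Finset.measurable_sum _ fun v _ => ?_
  exact hG.comp ((measurable_abal_can d (List.ofFn v)).const_add s)

section Law

variable {Ω : Type} [MeasurableSpace Ω] (P : Measure Ω) [IsProbabilityMeasure P]
  {d : ℕ} {Z : Edge d → Ω → ℝ} {v : ℝ≥0}

lemma tuple_law (hZmeas : ∀ e, Measurable (Z e))
    (hZindep : iIndepFun Z P)
    (hZgauss : ∀ e, P.map (Z e) = gaussianReal 0 v)
    (I : Finset (Edge d)) (ρ : Edge d → Edge d) (hρ : Function.Injective ρ) :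
    P.map (fun ω (i : I) => Z (ρ ↑i) ω) = Measure.pi (fun _ : I => gaussianReal 0 v) := by
  classical
  have htuple : Measurable (fun ω (i : I) => Z (ρ ↑i) ω) :=
    measurable_pi_lambda _ fun i => hZmeas _
  refine (Measure.pi_eq fun s hs => ?_).symm
  rw [Measure.map_apply htuple (MeasurableSet.univ_pi hs)]
  set sets : Edge d → Set ℝ :=
    fun e => if h : ∃ i : I, ρ ↑i = e then s h.choose else Set.univ with hsets_def
  have hsets : ∀ i : I, sets (ρ ↑i) = s i := by
    intro i
    have hex : ∃ j : I, ρ ↑j = ρ ↑i := ⟨i, rfl⟩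
    have h2 : hex.choose = i := Subtype.ext (hρ hex.choose_spec)
    simp only [hsets_def, dif_pos hex, h2]
  have hsetsm : ∀ e, MeasurableSet (sets e) := by
    intro e
    rw [hsets_def]
    dsimp only
    split
    · exact hs _
    · exact MeasurableSet.univ
  set g : I → Edge d := fun i => ρ ↑i with hg_def
  have hginj : Function.Injective g := fun a b hab => Subtype.ext (hρ hab)
  have hpre : ((fun ω (i : I) => Z (ρ ↑i) ω) ⁻¹' Set.pi Set.univ s)
      = ⋂ e ∈ Finset.image g Finset.univ, Z e ⁻¹' (sets e) := by
    ext ω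
    simp only [Set.mem_preimage, Set.mem_univ_pi, Set.mem_iInter, Finset.mem_image,
      Finset.mem_univ, true_and]
    constructor
    · rintro h e ⟨i, rfl⟩
      rw [hg_def]
      simp only [hsets i]
      exact h i
    · intro h i
      have h3 := h (g i) ⟨i, rfl⟩
      rw [hg_def] at h3
      simp only [hsets i] at h3
      exact h3
  rw [hpre, hZindep.measure_inter_preimage_eq_mul _ (fun e _ => hsetsm e)]
  rw [Finset.prod_image (fun a _ b _ h => hginj h)]
  refine Finset.prod_congr rfl fun i _ => ?_
  rw [hg_def]
  simp only [hsets i]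
  rw [← hZgauss (ρ ↑i), Measure.map_apply (hZmeas _) (hs i)]

lemma map_proc_relabel (hZmeas : ∀ e, Measurable (Z e))
    (hZindep : iIndepFun Z P)
    (hZgauss : ∀ e, P.map (Z e) = gaussianReal 0 v)
    (ρ : Edge d → Edge d) (hρ : Function.Injective ρ) :
    P.map (fun ω (e : Edge d) => Z (ρ e) ω) = P.map (proc d Z) := by
  have hm1 : Measurable (fun ω (e : Edge d) => Z (ρ e) ω) :=
    measurable_pi_lambda _ fun e => hZmeas _
  have hm2 : Measurable (proc d Z) := measurable_proc d hZmeas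
  haveI : IsProbabilityMeasure (P.map (fun ω (e : Edge d) => Z (ρ e) ω)) :=
    Measure.isProbabilityMeasure_map hm1.aemeasurable
  haveI : IsProbabilityMeasure (P.map (proc d Z)) :=
    Measure.isProbabilityMeasure_map hm2.aemeasurable
  refine ext_of_generate_finite (measurableCylinders (fun _ : Edge d => ℝ))
    generateFrom_measurableCylinders.symm isPiSystem_measurableCylinders ?_ ?_
  · intro t ht
    obtain ⟨I, S, hS, rfl⟩ := (mem_measurableCylinders t).1 ht
    rw [Measure.map_apply hm1 (hS.cylinder _), Measure.map_apply hm2 (hS.cylinder _)]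
    have h1 : (fun ω (e : Edge d) => Z (ρ e) ω) ⁻¹' cylinder I S
        = (fun ω (i : I) => Z (ρ ↑i) ω) ⁻¹' S := rfl
    have h2 : (proc d Z) ⁻¹' cylinder I S
        = (fun ω (i : I) => Z (↑i) ω) ⁻¹' S := rfl
    have hid : (fun ω (i : I) => Z (↑i) ω) = (fun ω (i : I) => Z (id ↑i) ω) := rfl
    rw [h1, h2, ← Measure.map_apply (measurable_pi_lambda _ fun i : I => hZmeas _) hS,
      hid, ← Measure.map_apply (measurable_pi_lambda _ fun i : I => hZmeas _) hS,
      tuple_law P hZmeas hZindep hZgauss I ρ hρ,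
      tuple_law P hZmeas hZindep hZgauss I id Function.injective_id]
  · simp

end Law

end

end S10

namespace S10

noncomputable section

open MeasureTheory

section Indep

variable {Ω : Type} [MeasurableSpace Ω] {P : Measure Ω} [IsProbabilityMeasure P]
  {d : ℕ} {Z : Edge d → Ω → ℝ}

/-- the index block of edges in the `i`-th subtree -/
def blockS (d : ℕ) (i : Fin d) : Set (Edge d) := {e | e.1.head? = some i}

/-- the root-family block -/
def rootS (d : ℕ) : Set (Edge d) := {e | e.1 = []}

lemma rel_mem_blockS (d : ℕ) (i : Fin d) (e : Edge d) : rel d i e ∈ blockS d i := rfl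

lemma disjoint_root_block (d : ℕ) (i : Fin d) : Disjoint (blockS d i) (rootS d) := by
  rw [Set.disjoint_left]
  rintro ⟨w, j⟩ h1 h2
  simp only [blockS, Set.mem_setOf_eq] at h1
  simp only [rootS, Set.mem_setOf_eq] at h2
  rw [h2] at h1
  simp at h1

lemma disjoint_block_block (d : ℕ) {i i' : Fin d} (h : i ≠ i') :
    Disjoint (blockS d i) (blockS d i') := by
  rw [Set.disjoint_left]
  rintro ⟨w, j⟩ h1 h2
  simp only [blockS, Set.mem_setOf_eq] at h1 h2
  rw [h1] at h2
  exact h (by simpa using h2)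

variable (hZmeas : ∀ e, Measurable (Z e))

/-- σ-algebra generated by the edges in `S`. -/
def sigmaOf (Z : Edge d → Ω → ℝ) (S : Set (Edge d)) : MeasurableSpace Ω :=
  ⨆ e ∈ S, MeasurableSpace.comap (Z e) inferInstance

include hZmeas in
lemma measurableSet_pre_sigmaOf {S : Set (Edge d)} {ρ : Edge d → Edge d}
    (hran : ∀ e, ρ e ∈ S) {C : Set (Edge d → ℝ)} (hC : MeasurableSet C) :
    MeasurableSet[sigmaOf Z S] ((fun ω (e : Edge d) => Z (ρ e) ω) ⁻¹' C) := by
  have hmeas : Measurable[sigmaOf Z S] (fun ω (e : Edge d) => Z (ρ e) ω) := by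
    letI : MeasurableSpace Ω := sigmaOf Z S
    refine measurable_pi_lambda _ fun e => ?_
    have h1 : Measurable[MeasurableSpace.comap (Z (ρ e)) inferInstance] (Z (ρ e)) :=
      measurable_iff_comap_le.mpr le_rfl
    refine h1.mono ?_ le_rfl
    exact le_iSup₂ (f := fun e' (_ : e' ∈ S) =>
      MeasurableSpace.comap (Z e') inferInstance) (ρ e) (hran e)
  exact hmeas hC

lemma measurableSet_root_sigmaOf {A : Fin d → Set ℝ} (hA : ∀ j, MeasurableSet (A j)) :
    MeasurableSet[sigmaOf Z (rootS d)]
      (⋂ j : Fin d, (Z (List.nil, j)) ⁻¹' (A j)) := by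
  refine MeasurableSet.iInter fun j => ?_
  have h1 : MeasurableSet[MeasurableSpace.comap (Z (List.nil, j)) inferInstance]
      ((Z (List.nil, j)) ⁻¹' (A j)) := ⟨A j, hA j, rfl⟩
  have h2 : MeasurableSpace.comap (Z (List.nil, j)) inferInstance
      ≤ sigmaOf Z (rootS d) :=
    le_iSup₂ (f := fun e' (_ : e' ∈ rootS d) =>
      MeasurableSpace.comap (Z e') inferInstance) (List.nil, j) rfl
  exact h2 _ h1

include hZmeas in
lemma indep_trunk_blocks
    (hZindep : iIndepFun Z P)
    {T : Set Ω} (hT : MeasurableSet[sigmaOf Z (rootS d)] T)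
    {E : Fin d → Set Ω} (hE : ∀ i, MeasurableSet[sigmaOf Z (blockS d i)] (E i)) :
    P (T ∩ ⋂ i, E i) = P T * ∏ i : Fin d, P (E i) := by
  classical
  have h_le : ∀ e : Edge d, MeasurableSpace.comap (Z e) inferInstance ≤ _ :=
    fun e => (hZmeas e).comap_le
  have key : ∀ s : Finset (Fin d), P (T ∩ ⋂ i ∈ s, E i) = P T * ∏ i ∈ s, P (E i) := by
    intro s
    induction s using Finset.induction with
    | empty => simp
    | @insert a s ha ih =>
      have hU : Disjoint (blockS d a)
          (rootS d ∪ ⋃ i ∈ (s : Set (Fin d)), blockS d i) := by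
        refine Set.disjoint_union_right.2 ⟨disjoint_root_block d a, ?_⟩
        refine Set.disjoint_iUnion₂_right.2 fun i hi => ?_
        exact disjoint_block_block d (fun h => ha (h ▸ hi))
      have hindep : ProbabilityTheory.Indep
          (sigmaOf Z (blockS d a))
          (sigmaOf Z (rootS d ∪ ⋃ i ∈ (s : Set (Fin d)), blockS d i)) P :=
        ProbabilityTheory.indep_iSup_of_disjoint h_le hZindep.iIndep hU
      have hTm : MeasurableSet[sigmaOf Z (rootS d ∪ ⋃ i ∈ (s : Set (Fin d)), blockS d i)] T := by
        have hle : sigmaOf Z (rootS d)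
            ≤ sigmaOf Z (rootS d ∪ ⋃ i ∈ (s : Set (Fin d)), blockS d i) :=
          biSup_mono Set.subset_union_left
        exact hle _ hT
      have hEm : ∀ i ∈ s, MeasurableSet[sigmaOf Z
          (rootS d ∪ ⋃ i ∈ (s : Set (Fin d)), blockS d i)] (E i) := by
        intro i hi
        have hle : sigmaOf Z (blockS d i)
            ≤ sigmaOf Z (rootS d ∪ ⋃ i ∈ (s : Set (Fin d)), blockS d i) := by
          refine biSup_mono ?_
          exact (Set.subset_iUnion₂ (s := fun i' (_ : i' ∈ (s : Set (Fin d))) => blockS d i') i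
            hi).trans Set.subset_union_right
        exact hle _ (hE i)
      have hrest : MeasurableSet[sigmaOf Z
          (rootS d ∪ ⋃ i ∈ (s : Set (Fin d)), blockS d i)] (T ∩ ⋂ i ∈ s, E i) := by
        refine hTm.inter ?_
        exact MeasurableSet.biInter s.countable_toSet hEm
      have heq : T ∩ ⋂ i ∈ insert a s, E i = E a ∩ (T ∩ ⋂ i ∈ s, E i) := by
        rw [Finset.set_biInter_insert]
        ext ω
        simp only [Set.mem_inter_iff, Set.mem_iInter]
        tauto
      rw [heq,
        (hindep.indepSet_of_measurableSet (hE a) hrest).measure_inter_eq_mul,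
        ih, Finset.prod_insert ha]
      ring
  have h2 := key Finset.univ
  simpa using h2

end Indep

end

end S10

namespace S10

noncomputable section

open MeasureTheory

/-- the sandwich event -/
def EvO {Ω : Type} (G : ℝ → ℝ) (d : ℕ) (Z : Edge d → Ω → ℝ) (x ρp b : ℝ) (k : ℕ) : Set Ω :=
  {ω | x - ρp < HsG G d Z (-b) k ω ∧ HsG G d Z b k ω < x + ρp}

/-- the trunk event -/
def TrO {Ω : Type} (d : ℕ) (Z : Edge d → Ω → ℝ) (τ : ℝ) : Set Ω :=
  ⋂ j : Fin d, (Z (List.nil, j)) ⁻¹' Set.Icc (-(τ/2)) (τ/2)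

lemma measurableSet_EvC {G : ℝ → ℝ} (hG : Measurable G) (d : ℕ) (x ρp b : ℝ) (k : ℕ) :
    MeasurableSet (EvO G d (Zcan d) x ρp b k) := by
  have h1 : EvO G d (Zcan d) x ρp b k
      = {z | x - ρp < HsG G d (Zcan d) (-b) k z} ∩ {z | HsG G d (Zcan d) b k z < x + ρp} := rfl
  rw [h1]
  exact (measurableSet_lt measurable_const (measurable_hsG_can hG d (-b) k)).inter
    (measurableSet_lt (measurable_hsG_can hG d b k) measurable_const)

section Avg

variable {d : ℕ} (hd : 0 < d)

include hd in
lemma avg_lt {f : Fin d → ℝ} {c : ℝ} (h : ∀ i, f i < c) :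
    (1 / (d:ℝ)) * ∑ i, f i < c := by
  have hdR : (0:ℝ) < d := by exact_mod_cast hd
  have h1 : ∑ i, f i < ∑ _i : Fin d, c :=
    Finset.sum_lt_sum_of_nonempty ⟨⟨0, hd⟩, Finset.mem_univ _⟩ fun i _ => h i
  have h2 : ∑ _i : Fin d, c = (d:ℝ) * c := by
    simp [Finset.sum_const, Finset.card_univ, mul_comm]
  have h3 : (1 / (d:ℝ)) * ∑ i, f i < (1 / (d:ℝ)) * ((d:ℝ) * c) := by
    refine mul_lt_mul_of_pos_left ?_ (by positivity)
    rw [← h2]; exact h1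
  calc (1 / (d:ℝ)) * ∑ i, f i < (1 / (d:ℝ)) * ((d:ℝ) * c) := h3
    _ = c := by field_simp

include hd in
lemma avg_gt {f : Fin d → ℝ} {c : ℝ} (h : ∀ i, c < f i) :
    c < (1 / (d:ℝ)) * ∑ i, f i := by
  have := avg_lt hd (f := fun i => -f i) (c := -c) (fun i => by
    show -f i < -c
    exact neg_lt_neg (h i))
  have h2 : ∑ i : Fin d, -f i = -∑ i, f i := by rw [Finset.sum_neg_distrib]
  rw [h2] at this
  nlinarith

end Avg

lemma rec_incl {Ω : Type} {G : ℝ → ℝ} (hGmono : Monotone G) {d : ℕ} (hd : 0 < d)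
    (Z : Edge d → Ω → ℝ) (x ρp : ℝ) {β : ℝ} (hβ : 0 ≤ β) (k : ℕ) :
    (TrO d Z β ∩ ⋂ i : Fin d, EvO G d (subZ d Z i) x ρp (2*β) k)
      ⊆ EvO G d Z x ρp β (k+1) := by
  rintro ω ⟨hT, hE⟩
  rw [Set.mem_iInter] at hE
  have hdR : (0:ℝ) < d := by exact_mod_cast hd
  have hY : ∀ i : Fin d, |Ybal d Z List.nil i ω| ≤ β := by
    intro i
    have hZb : ∀ j : Fin d, |Z (List.nil, j) ω| ≤ β/2 := by
      intro j
      have h0 := Set.mem_iInter.1 hT j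
      rw [Set.mem_preimage, Set.mem_Icc] at h0
      exact abs_le.2 ⟨by linarith [h0.1], h0.2⟩
    have h1 : |∑ j : Fin d, Z (List.nil, j) ω| ≤ (d:ℝ) * (β/2) := by
      calc |∑ j : Fin d, Z (List.nil, j) ω| ≤ ∑ j : Fin d, |Z (List.nil, j) ω| :=
            Finset.abs_sum_le_sum_abs _ _
        _ ≤ ∑ _j : Fin d, (β/2) := Finset.sum_le_sum fun j _ => hZb j
        _ = (d:ℝ) * (β/2) := by simp [Finset.sum_const, Finset.card_univ, mul_comm]
    have h2 : |Ybal d Z List.nil i ω|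
        ≤ |Z (List.nil, i) ω| + (1/(d:ℝ)) * |∑ j : Fin d, Z (List.nil, j) ω| := by
      rw [Ybal]
      calc |Z (List.nil, i) ω - 1 / (d:ℝ) * ∑ j : Fin d, Z (List.nil, j) ω|
          ≤ |Z (List.nil, i) ω| + |1 / (d:ℝ) * ∑ j : Fin d, Z (List.nil, j) ω| := abs_sub _ _
        _ = |Z (List.nil, i) ω| + (1/(d:ℝ)) * |∑ j : Fin d, Z (List.nil, j) ω| := by
            rw [abs_mul, abs_of_pos (by positivity : (0:ℝ) < 1/(d:ℝ))]
    have h3 : (1/(d:ℝ)) * |∑ j : Fin d, Z (List.nil, j) ω| ≤ β/2 := by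
      have := mul_le_mul_of_nonneg_left h1 (by positivity : (0:ℝ) ≤ 1/(d:ℝ))
      calc (1/(d:ℝ)) * |∑ j : Fin d, Z (List.nil, j) ω|
          ≤ (1/(d:ℝ)) * ((d:ℝ) * (β/2)) := this
        _ = β/2 := by field_simp
    have := hZb i
    linarith
  constructor
  · show x - ρp < HsG G d Z (-β) (k+1) ω
    rw [hsG_succ G d hd Z (-β) k ω]
    refine avg_gt hd fun i => ?_
    refine lt_of_lt_of_le (hE i).1 ?_
    refine hsG_mono_s hGmono _ ?_ k ω
    have := (abs_le.1 (hY i)).1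
    linarith
  · show HsG G d Z β (k+1) ω < x + ρp
    rw [hsG_succ G d hd Z β k ω]
    refine avg_lt hd fun i => ?_
    refine lt_of_le_of_lt ?_ (hE i).2
    refine hsG_mono_s hGmono _ ?_ k ω
    have := (abs_le.1 (hY i)).2
    linarith

end

end S10

namespace S10

noncomputable section

open MeasureTheory

/-- lower bound constant for the gaussian density on `[-1,1]` -/
def gc (v : ℝ≥0) : ℝ := (Real.sqrt (2 * Real.pi * (v:ℝ)))⁻¹ * Real.exp (-(1:ℝ)/(2*(v:ℝ)))

lemma gc_pos {v : ℝ≥0} (hv : v ≠ 0) : 0 < gc v := by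
  have hvR : (0:ℝ) < (v:ℝ) := by
    have := pos_iff_ne_zero.2 hv
    exact_mod_cast this
  have h2 : (0:ℝ) < 2 * Real.pi * (v:ℝ) := by positivity
  have := Real.sqrt_pos.2 h2
  rw [gc]
  positivity

lemma gauss_icc_lb {v : ℝ≥0} (hv : v ≠ 0) {τ : ℝ} (hτ : 0 < τ) (hτ2 : τ ≤ 2) :
    ENNReal.ofReal (gc v * τ) ≤ gaussianReal 0 v (Set.Icc (-(τ/2)) (τ/2)) := by
  have hvR : (0:ℝ) < (v:ℝ) := by
    have := pos_iff_ne_zero.2 hv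
    exact_mod_cast this
  rw [gaussianReal_apply 0 hv]
  have hpdf : ∀ x ∈ Set.Icc (-(τ/2)) (τ/2), ENNReal.ofReal (gc v) ≤ gaussianPDF 0 v x := by
    intro x hx
    rw [Set.mem_Icc] at hx
    have hx1 : x^2 ≤ 1 := by nlinarith [hx.1, hx.2]
    rw [gaussianPDF]
    refine ENNReal.ofReal_le_ofReal ?_
    rw [gaussianPDFReal, gc]
    refine mul_le_mul_of_nonneg_left ?_ (by positivity)
    refine Real.exp_le_exp.2 ?_
    rw [div_le_div_iff₀ (by positivity) (by positivity)]
    nlinarith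
  calc ENNReal.ofReal (gc v * τ)
      = ENNReal.ofReal (gc v) * ENNReal.ofReal τ := ENNReal.ofReal_mul (gc_pos hv).le
    _ = ENNReal.ofReal (gc v) * volume (Set.Icc (-(τ/2)) (τ/2)) := by
        rw [Real.volume_Icc]
        congr 1
        rw [show τ/2 - -(τ/2) = τ by ring]
    _ = ∫⁻ _x in Set.Icc (-(τ/2)) (τ/2), ENNReal.ofReal (gc v) := by
        rw [setLIntegral_const]
    _ ≤ ∫⁻ x in Set.Icc (-(τ/2)) (τ/2), gaussianPDF 0 v x :=
        setLIntegral_mono (measurable_gaussianPDF 0 v) hpdf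

section Prob

variable {Ω : Type} [MeasurableSpace Ω] {P : Measure Ω} [IsProbabilityMeasure P]
  {d : ℕ} {Z : Edge d → Ω → ℝ} {v : ℝ≥0}

variable (hZmeas : ∀ e, Measurable (Z e))
  (hZindep : iIndepFun Z P)
  (hZgauss : ∀ e, P.map (Z e) = gaussianReal 0 v)

include hZmeas hZindep hZgauss in
lemma trunk_prob (hv : v ≠ 0) {τ : ℝ} (hτ : 0 < τ) (hτ2 : τ ≤ 2) :
    ENNReal.ofReal (gc v * τ) ^ d ≤ P (TrO d Z τ) := by
  classical
  set g : Fin d → Edge d := fun j => ((List.nil : List (Fin d)), j) with hg_def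
  have hginj : Function.Injective g := by
    intro a b hab
    simpa [hg_def, Prod.mk.injEq] using hab
  have hIcc : MeasurableSet (Set.Icc (-(τ/2)) (τ/2)) := measurableSet_Icc
  have h1 : TrO d Z τ = ⋂ e ∈ Finset.image g Finset.univ,
      Z e ⁻¹' Set.Icc (-(τ/2)) (τ/2) := by
    rw [TrO]
    ext ω
    simp only [Set.mem_iInter, Finset.mem_image, Finset.mem_univ, true_and,
      Set.mem_preimage]
    constructor
    · rintro h e ⟨j, rfl⟩
      exact h j
    · intro h j
      exact h (g j) ⟨j, rfl⟩
  have h2 := hZindep.measure_inter_preimage_eq_mul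
    (S := Finset.image g Finset.univ)
    (sets := fun _ => Set.Icc (-(τ/2)) (τ/2)) (fun e _ => hIcc)
  rw [h1, h2, Finset.prod_image (fun a _ b _ h => hginj h)]
  have h3 : ∀ j : Fin d, P (Z (g j) ⁻¹' Set.Icc (-(τ/2)) (τ/2))
      = gaussianReal 0 v (Set.Icc (-(τ/2)) (τ/2)) := by
    intro j
    rw [← hZgauss (g j), Measure.map_apply (hZmeas _) hIcc]
  calc ENNReal.ofReal (gc v * τ) ^ d
      = ∏ _j : Fin d, ENNReal.ofReal (gc v * τ) := by
        rw [Finset.prod_const, Finset.card_univ, Fintype.card_fin]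
    _ ≤ ∏ j : Fin d, P (Z (g j) ⁻¹' Set.Icc (-(τ/2)) (τ/2)) := by
        refine Finset.prod_le_prod' fun j _ => ?_
        rw [h3 j]
        exact gauss_icc_lb hv hτ hτ2

include hZmeas hZindep hZgauss in
lemma law_EvO {G : ℝ → ℝ} (hGmeas : Measurable G) (i : Fin d) (x ρp b : ℝ) (k : ℕ) :
    P (EvO G d (subZ d Z i) x ρp b k) = P (EvO G d Z x ρp b k) := by
  have hEvC : MeasurableSet (EvO G d (Zcan d) x ρp b k) := measurableSet_EvC hGmeas d x ρp b k
  have hm1 : Measurable (fun ω (e : Edge d) => Z (rel d i e) ω) :=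
    measurable_pi_lambda _ fun e => hZmeas _
  have h1 : EvO G d (subZ d Z i) x ρp b k
      = (fun ω (e : Edge d) => Z (rel d i e) ω) ⁻¹' (EvO G d (Zcan d) x ρp b k) := rfl
  have h2 : EvO G d Z x ρp b k = (proc d Z) ⁻¹' (EvO G d (Zcan d) x ρp b k) := rfl
  rw [h1, h2, ← Measure.map_apply hm1 hEvC,
    ← Measure.map_apply (measurable_proc d hZmeas) hEvC,
    map_proc_relabel P hZmeas hZindep hZgauss (rel d i) (rel_injective d i)]

include hZmeas hZindep hZgauss in
lemma rec_prob (hd : 0 < d) {G : ℝ → ℝ} (hGmeas : Measurable G) (hGmono : Monotone G)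
    (x ρp : ℝ) {β : ℝ} (hβ : 0 < β) (k : ℕ) :
    P (TrO d Z β) * P (EvO G d Z x ρp (2*β) k) ^ d ≤ P (EvO G d Z x ρp β (k+1)) := by
  have hEvC : MeasurableSet (EvO G d (Zcan d) x ρp (2*β) k) :=
    measurableSet_EvC hGmeas d x ρp (2*β) k
  have hsub : ∀ i : Fin d, EvO G d (subZ d Z i) x ρp (2*β) k
      = (fun ω (e : Edge d) => Z (rel d i e) ω) ⁻¹' (EvO G d (Zcan d) x ρp (2*β) k) :=
    fun i => rfl
  have hE : ∀ i : Fin d, MeasurableSet[sigmaOf Z (blockS d i)]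
      (EvO G d (subZ d Z i) x ρp (2*β) k) := by
    intro i
    rw [hsub i]
    exact measurableSet_pre_sigmaOf hZmeas (rel_mem_blockS d i) hEvC
  have hT : MeasurableSet[sigmaOf Z (rootS d)] (TrO d Z β) :=
    measurableSet_root_sigmaOf (fun j => measurableSet_Icc)
  have hkey := indep_trunk_blocks hZmeas hZindep hT hE
  have hincl := rec_incl hGmono hd Z x ρp hβ.le k
  calc P (TrO d Z β) * P (EvO G d Z x ρp (2*β) k) ^ d
      = P (TrO d Z β) * ∏ i : Fin d, P (EvO G d (subZ d Z i) x ρp (2*β) k) := by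
        congr 1
        rw [Finset.prod_congr rfl fun i _ => law_EvO hZmeas hZindep hZgauss hGmeas i x ρp (2*β) k]
        rw [Finset.prod_const, Finset.card_univ, Fintype.card_fin]
    _ = P (TrO d Z β ∩ ⋂ i : Fin d, EvO G d (subZ d Z i) x ρp (2*β) k) := hkey.symm
    _ ≤ P (EvO G d Z x ρp β (k+1)) := measure_mono hincl

end Prob

end

end S10

namespace S10

noncomputable section

open MeasureTheory

/-- accumulated log-cost -/
def LrF (c η : ℝ) (d : ℕ) : ℕ → ℝ
  | 0 => 0
  | n+1 => d * Real.log (c * (η * (1/2)^(n+1))) + d * LrF c η d n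

section Unroll

variable {Ω : Type} [MeasurableSpace Ω] {P : Measure Ω} [IsProbabilityMeasure P]
  {d : ℕ} {Z : Edge d → Ω → ℝ} {v : ℝ≥0}

variable (hZmeas : ∀ e, Measurable (Z e))
  (hZindep : iIndepFun Z P)
  (hZgauss : ∀ e, P.map (Z e) = gaussianReal 0 v)

include hZmeas hZindep hZgauss in
lemma unroll (hv : v ≠ 0) (hd : 0 < d) {G : ℝ → ℝ} (hGmeas : Measurable G)
    (hGmono : Monotone G) (x ρp : ℝ) {η : ℝ} (hη : 0 < η) (hη1 : η ≤ 1) (k₀ : ℕ) :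
    ∀ n : ℕ, ENNReal.ofReal (Real.exp (LrF (gc v) η d n))
        * P (EvO G d Z x ρp η k₀) ^ (d ^ n)
      ≤ P (EvO G d Z x ρp (η * (1/2)^n) (k₀ + n)) := by
  intro n
  induction n with
  | zero => simp [LrF]
  | succ n ih =>
    have hβ : (0:ℝ) < η * (1/2)^(n+1) := by positivity
    have hβ2 : η * (1/2:ℝ)^(n+1) ≤ 2 := by
      have h1 : ((1:ℝ)/2)^(n+1) ≤ 1 := by
        refine pow_le_one₀ (by norm_num) (by norm_num)
      nlinarith
    have hstep := rec_prob hZmeas hZindep hZgauss hd hGmeas hGmono x ρp hβ (k₀ + n)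
    have h2β : 2 * (η * (1/2:ℝ)^(n+1)) = η * (1/2)^n := by ring
    rw [h2β] at hstep
    have htr := trunk_prob hZmeas hZindep hZgauss hv hβ hβ2
    have hgcβ : (0:ℝ) < gc v * (η * (1/2)^(n+1)) := mul_pos (gc_pos hv) hβ
    have hexp : Real.exp (LrF (gc v) η d (n+1))
        = (gc v * (η * (1/2)^(n+1)))^d * (Real.exp (LrF (gc v) η d n))^d := by
      show Real.exp (d * Real.log (gc v * (η * (1/2)^(n+1))) + d * LrF (gc v) η d n) = _
      rw [Real.exp_add, Real.exp_nat_mul, Real.exp_nat_mul, Real.exp_log hgcβ]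
    have hLHS : ENNReal.ofReal (Real.exp (LrF (gc v) η d (n+1)))
          * P (EvO G d Z x ρp η k₀) ^ (d ^ (n+1))
        = (ENNReal.ofReal (gc v * (η * (1/2)^(n+1))))^d
          * (ENNReal.ofReal (Real.exp (LrF (gc v) η d n))
              * P (EvO G d Z x ρp η k₀) ^ (d ^ n))^d := by
      rw [hexp, ENNReal.ofReal_mul (by positivity), ENNReal.ofReal_pow hgcβ.le,
        ENNReal.ofReal_pow (Real.exp_pos _).le, mul_pow, ← pow_mul, ← pow_succ, mul_assoc]
    rw [hLHS]
    calc (ENNReal.ofReal (gc v * (η * (1/2)^(n+1))))^d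
          * (ENNReal.ofReal (Real.exp (LrF (gc v) η d n))
              * P (EvO G d Z x ρp η k₀) ^ (d ^ n))^d
        ≤ P (TrO d Z (η * (1/2)^(n+1))) * (P (EvO G d Z x ρp (η * (1/2)^n) (k₀ + n)))^d :=
          mul_le_mul' htr (pow_le_pow_left' ih d)
      _ ≤ P (EvO G d Z x ρp (η * (1/2)^(n+1)) (k₀ + n + 1)) := hstep

end Unroll

lemma lrF_lb {c η : ℝ} (hc : 0 < c) (hη : 0 < η) {d : ℕ} (hd : 2 ≤ d) :
    ∀ n : ℕ, -(2 * |Real.log (c*η)| + 6) * (d:ℝ)^n ≤ LrF c η d n := by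
  set B := |Real.log (c*η)| with hB_def
  have hB0 : 0 ≤ B := abs_nonneg _
  have hdR : (2:ℝ) ≤ (d:ℝ) := by exact_mod_cast hd
  have hd0 : (0:ℝ) < d := by linarith
  have hpow : ∀ n : ℕ, (1:ℝ) ≤ (d:ℝ)^n * (1/2)^n := by
    intro n
    have h1 : ((2:ℝ))^n ≤ (d:ℝ)^n := pow_le_pow_left₀ (by norm_num) hdR n
    have h2 : ((2:ℝ))^n * (1/2)^n = 1 := by
      rw [← mul_pow]
      norm_num
    nlinarith [pow_pos (show (0:ℝ) < 1/2 by norm_num) n, pow_pos hd0 n]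
  have hlog : ∀ n : ℕ, -(B + (n+1)) ≤ Real.log (c * (η * (1/2)^(n+1))) := by
    intro n
    have harg : c * (η * (1/2:ℝ)^(n+1)) = (c*η) * (1/2)^(n+1) := by ring
    rw [harg, Real.log_mul (by positivity) (by positivity), Real.log_pow]
    have hl2 : Real.log (1/2) = -Real.log 2 := by
      rw [one_div, Real.log_inv]
    have hl2' : Real.log 2 ≤ 1 := by
      have := Real.log_le_sub_one_of_pos (show (0:ℝ) < 2 by norm_num)
      linarith
    have hlog2pos : (0:ℝ) ≤ Real.log 2 := Real.log_nonneg (by norm_num)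
    have h3 : -B ≤ Real.log (c*η) := neg_abs_le _
    have h4 : ((n:ℝ)+1) * Real.log (1/2) ≥ -((n:ℝ)+1) := by
      rw [hl2]
      have : ((n:ℝ)+1) * Real.log 2 ≤ ((n:ℝ)+1) * 1 := by
        refine mul_le_mul_of_nonneg_left hl2' (by positivity)
      nlinarith
    push_cast
    nlinarith
  -- strengthened induction
  have main : ∀ n : ℕ,
      (-(2*B + 6) + (B + n + 3) * 2 * (1/2)^n) * (d:ℝ)^n ≤ LrF c η d n := by
    intro n
    induction n with
    | zero =>
      simp only [LrF, pow_zero, mul_one, Nat.cast_zero]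
      nlinarith
    | succ n ih =>
      have hstep : LrF c η d (n+1) = d * Real.log (c * (η * (1/2)^(n+1))) + d * LrF c η d n :=
        rfl
      rw [hstep]
      push_cast
      have h1 := hlog n
      have h2 : (d:ℝ) * (-(B + (n+1))) ≤ (d:ℝ) * Real.log (c * (η * (1/2)^(n+1))) :=
        mul_le_mul_of_nonneg_left h1 (by positivity)
      have h3 : (d:ℝ) * ((-(2*B + 6) + (B + n + 3) * 2 * (1/2)^n) * (d:ℝ)^n)
          ≤ (d:ℝ) * LrF c η d n := mul_le_mul_of_nonneg_left ih (by positivity)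
      have hkey : (-(2*B + 6) + (B + (n+1) + 3) * 2 * (1/2)^(n+1)) * (d:ℝ)^(n+1)
          ≤ (d:ℝ) * (-(B + (n+1)))
            + (d:ℝ) * ((-(2*B + 6) + (B + n + 3) * 2 * (1/2)^n) * (d:ℝ)^n) := by
        have hp := hpow n
        have hq : ((1:ℝ)/2)^(n+1) = (1/2) * (1/2)^n := by ring
        have hr : ((d:ℝ))^(n+1) = (d:ℝ) * (d:ℝ)^n := by ring
        rw [hq, hr]
        have hpw : (0:ℝ) < (1/2:ℝ)^n := by positivity
        have hdn : (0:ℝ) < (d:ℝ)^n := by positivity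
        nlinarith [mul_pos hpw hdn, mul_le_mul_of_nonneg_left hp (show (0:ℝ) ≤ (B+n+2)*(d:ℝ) by positivity)]
      linarith
  intro n
  have h5 := main n
  have h6 : (0:ℝ) ≤ (B + n + 3) * 2 * (1/2)^n * (d:ℝ)^n := by positivity
  nlinarith [h5, pow_pos hd0 n]

end

end S10

namespace S10

noncomputable section

open MeasureTheory

lemma base_incl {Ω : Type} {G : ℝ → ℝ} (hGmono : Monotone G) (hG0 : ∀ y, 0 ≤ G y)
    {γ : ℝ} (hGs : ∀ y t : ℝ, 0 ≤ t → G y ≤ Real.exp (γ * t) * G (y - t))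
    {d : ℕ} (Z : Edge d → Ω → ℝ) {x ε η : ℝ} (hη : 0 ≤ η)
    (hbound : (Real.exp (γ * η) - 1) * (x + ε/2) ≤ ε/8) (hE1 : (1:ℝ) ≤ Real.exp (γ * η))
    (hx : 0 ≤ x) (hε : 0 < ε) (k : ℕ) :
    {ω | HsG G d Z 0 k ω ∈ Set.Ioo (x - ε/2) (x + ε/2)} ⊆ EvO G d Z x (5*ε/8) η k := by
  intro ω hω
  simp only [Set.mem_setOf_eq, Set.mem_Ioo] at hω
  obtain ⟨hlo, hhi⟩ := hω
  have hH0 : 0 ≤ HsG G d Z 0 k ω := hsG_nonneg hG0 Z 0 k ω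
  refine ⟨?_, ?_⟩
  · show x - 5*ε/8 < HsG G d Z (-η) k ω
    have hA0 : 0 ≤ HsG G d Z (-η) k ω := hsG_nonneg hG0 Z _ k ω
    have hAH : HsG G d Z (-η) k ω ≤ HsG G d Z 0 k ω :=
      hsG_mono_s hGmono Z (by linarith) k ω
    have h1 : HsG G d Z 0 k ω ≤ Real.exp (γ * η) * HsG G d Z (0 - η) k ω :=
      hsG_shift hGs Z hη k ω
    rw [zero_sub] at h1
    have h2 : (Real.exp (γ * η) - 1) * HsG G d Z (-η) k ω
        ≤ (Real.exp (γ * η) - 1) * (x + ε/2) := by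
      refine mul_le_mul_of_nonneg_left (by linarith) (by linarith)
    nlinarith
  · show HsG G d Z η k ω < x + 5*ε/8
    have h1 : HsG G d Z η k ω ≤ Real.exp (γ * η) * HsG G d Z (η - η) k ω :=
      hsG_shift hGs Z hη k ω
    rw [sub_self] at h1
    have h2 : (Real.exp (γ * η) - 1) * HsG G d Z 0 k ω
        ≤ (Real.exp (γ * η) - 1) * (x + ε/2) := by
      refine mul_le_mul_of_nonneg_left (by linarith) (by linarith)
    nlinarith

lemma final_incl {Ω : Type} {G : ℝ → ℝ} (hGmono : Monotone G) {d : ℕ}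
    (Z : Edge d → Ω → ℝ) {x ε b : ℝ} (hb : 0 ≤ b) (hε : 0 < ε) (k : ℕ) :
    EvO G d Z x (5*ε/8) b k ⊆ {ω | HsG G d Z 0 k ω ∈ Set.Ioo (x - ε) (x + ε)} := by
  rintro ω ⟨h1, h2⟩
  have hm1 : HsG G d Z (-b) k ω ≤ HsG G d Z 0 k ω := hsG_mono_s hGmono Z (by linarith) k ω
  have hm2 : HsG G d Z 0 k ω ≤ HsG G d Z b k ω := hsG_mono_s hGmono Z (by linarith) k ω
  exact ⟨by linarith, by linarith⟩

lemma ereal_cancel (a : ℝ) (X : EReal) : X ≤ (((-a : ℝ) : EReal) + X) + ((a : ℝ) : EReal) := by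
  induction X using EReal.rec with
  | bot => simp
  | coe r =>
    rw [← EReal.coe_add, ← EReal.coe_add]
    exact le_of_eq (by norm_num)
  | top =>
    rw [EReal.add_top_of_ne_bot (by simp), EReal.top_add_of_ne_bot (by simp)]

lemma ereal_scale {d : ℕ} (hd : 2 ≤ d) (k₀ n : ℕ) (K : ℝ) (lq : EReal) (hlq : lq ≠ ⊤) :
    ((1 / (d:ℝ)^(k₀+n) : ℝ) : EReal) * (((-K * (d:ℝ)^n : ℝ) : EReal) + ((d^n : ℕ) : EReal) * lq)
      = (((-K / (d:ℝ)^k₀) : ℝ) : EReal) + ((1 / (d:ℝ)^k₀ : ℝ) : EReal) * lq := by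
  have hd0 : (0:ℝ) < d := by
    have : (2:ℝ) ≤ d := by exact_mod_cast hd
    linarith
  have hdn : (0:ℝ) < (d:ℝ)^n := by positivity
  have hcast : ((d^n : ℕ) : EReal) = (((d:ℝ)^n : ℝ) : EReal) := by
    norm_cast
  induction lq using EReal.rec with
  | bot =>
    rw [hcast, EReal.coe_mul_bot_of_pos hdn, EReal.add_bot, EReal.coe_mul_bot_of_pos (by positivity),
      EReal.coe_mul_bot_of_pos (by positivity), EReal.add_bot]
  | coe r =>
    rw [hcast, ← EReal.coe_mul, ← EReal.coe_add, ← EReal.coe_mul, ← EReal.coe_mul,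
      ← EReal.coe_add]
    norm_cast
    rw [pow_add]
    field_simp
    push_cast
    ring
  | top => exact absurd rfl hlq

end

end S10

namespace S10

noncomputable section

open MeasureTheory ProbabilityTheory Filter

lemma hk_eq {Ω : Type} [MeasurableSpace Ω] (P : Measure Ω) (d : ℕ) (γ lam : ℝ)
    (Z : List (Fin d) × Fin d → Ω → ℝ) (MA : Ω → ℝ) (k : ℕ) (ω : Ω) :
    Hk P d γ lam Z MA k ω = HsG (Gfun P MA lam γ) d Z 0 k ω := by
  simp only [Hk, HsG, zero_add]

theorem master {Ω : Type} [MeasurableSpace Ω] (P : Measure Ω) [IsProbabilityMeasure P]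
    (d : ℕ) (hd : 2 ≤ d) (γ lam : ℝ) (hγ0 : 0 < γ) (hlam : 0 < lam)
    (Z : List (Fin d) × Fin d → Ω → ℝ)
    (hZmeas : ∀ e, Measurable (Z e))
    (hZindep : iIndepFun Z P)
    (hZgauss : ∀ e, P.map (Z e) = gaussianReal 0 ((d : ℝ≥0) / ((d : ℝ≥0) - 1)))
    (MA : Ω → ℝ) (hMAmeas : Measurable MA) (hMAnonneg : ∀ᵐ ω ∂P, 0 ≤ MA ω)
    (x : ℝ) (hx : 0 ≤ x) (ε : ℝ) (hε : 0 < ε) :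
    limsup (fun k : ℕ => lpr P d γ lam Z MA k (Set.Ioo (x - ε/2) (x + ε/2))) atTop
      ≤ liminf (fun k : ℕ => lpr P d γ lam Z MA k (Set.Ioo (x - ε) (x + ε))) atTop := by
  classical
  set v : ℝ≥0 := (d : ℝ≥0) / ((d : ℝ≥0) - 1) with hv_def
  have hd0 : 0 < d := by omega
  have hv : v ≠ 0 := by
    have h1 : (d : ℝ≥0) ≠ 0 := by
      simp only [ne_eq, Nat.cast_eq_zero]
      omega
    have h2 : (d : ℝ≥0) - 1 ≠ 0 := by
      intro h
      rw [tsub_eq_zero_iff_le] at h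
      have h4 : (2 : ℝ≥0) ≤ (d : ℝ≥0) := by exact_mod_cast hd
      have h5 := le_trans h4 h
      norm_num at h5
    exact div_ne_zero h1 h2
  set G : ℝ → ℝ := Gfun P MA lam γ with hG_def
  have hGmono : Monotone G := fun a b hab => gfun_mono hMAmeas hMAnonneg hlam hγ0 hab
  have hG0 : ∀ y, 0 ≤ G y := fun y => gfun_nonneg hMAmeas hMAnonneg hlam y
  have hGs : ∀ y t : ℝ, 0 ≤ t → G y ≤ Real.exp (γ * t) * G (y - t) :=
    fun y t ht => gfun_shift hMAmeas hMAnonneg hlam hγ0 ht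
  have hGmeas : Measurable G := gfun_measurable hMAmeas hMAnonneg hlam
  have hxε : (0:ℝ) < x + ε := by linarith
  have hlogpos : 0 < Real.log (1 + ε/(8*(x+ε))) := Real.log_pos (by
    have : 0 < ε/(8*(x+ε)) := by positivity
    linarith)
  set η : ℝ := min 1 ((1/γ) * Real.log (1 + ε/(8*(x+ε)))) with hη_def
  have hη0 : 0 < η := lt_min one_pos (by positivity)
  have hη1 : η ≤ 1 := min_le_left _ _
  have hE1 : (1:ℝ) ≤ Real.exp (γ * η) := by
    rw [← Real.exp_zero]
    exact Real.exp_le_exp.2 (by positivity)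
  have hbound : (Real.exp (γ * η) - 1) * (x + ε/2) ≤ ε/8 := by
    have h2 : η ≤ (1/γ) * Real.log (1 + ε/(8*(x+ε))) := min_le_right _ _
    have h1 : γ * η ≤ Real.log (1 + ε/(8*(x+ε))) := by
      have h3 := mul_le_mul_of_nonneg_left h2 hγ0.le
      calc γ * η ≤ γ * ((1/γ) * Real.log (1 + ε/(8*(x+ε)))) := h3
        _ = Real.log (1 + ε/(8*(x+ε))) := by
            rw [← mul_assoc, mul_one_div_cancel hγ0.ne', one_mul]
    have h3 : Real.exp (γ * η) ≤ 1 + ε/(8*(x+ε)) := by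
      calc Real.exp (γ * η) ≤ Real.exp (Real.log (1 + ε/(8*(x+ε)))) := Real.exp_le_exp.2 h1
        _ = 1 + ε/(8*(x+ε)) := Real.exp_log (by positivity)
    have h4 : Real.exp (γ*η) - 1 ≤ ε/(8*(x+ε)) := by linarith
    calc (Real.exp (γ*η) - 1) * (x + ε/2) ≤ (ε/(8*(x+ε))) * (x + ε/2) :=
          mul_le_mul_of_nonneg_right h4 (by linarith)
      _ ≤ (ε/(8*(x+ε))) * (x + ε) := by
          refine mul_le_mul_of_nonneg_left (by linarith) (by positivity)
      _ = ε/8 := by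
          field_simp
  set K : ℝ := 2 * |Real.log (gc v * η)| + 6 with hK_def
  have hK0 : 0 < K := by positivity
  -- the two ball-event inclusions
  have hballSmall : ∀ k : ℕ, {ω | Hk P d γ lam Z MA k ω ∈ Set.Ioo (x - ε/2) (x + ε/2)}
      ⊆ EvO G d Z x (5*ε/8) η k := by
    intro k
    have hseteq : {ω | Hk P d γ lam Z MA k ω ∈ Set.Ioo (x - ε/2) (x + ε/2)}
        = {ω | HsG G d Z 0 k ω ∈ Set.Ioo (x - ε/2) (x + ε/2)} := by
      ext ω
      rw [Set.mem_setOf_eq, Set.mem_setOf_eq, hk_eq]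
    rw [hseteq]
    exact base_incl hGmono hG0 hGs Z hη0.le hbound hE1 hx hε k
  have hballBig : ∀ (k : ℕ) (b : ℝ), 0 ≤ b → EvO G d Z x (5*ε/8) b k
      ⊆ {ω | Hk P d γ lam Z MA k ω ∈ Set.Ioo (x - ε) (x + ε)} := by
    intro k b hb
    have hseteq : {ω | Hk P d γ lam Z MA k ω ∈ Set.Ioo (x - ε) (x + ε)}
        = {ω | HsG G d Z 0 k ω ∈ Set.Ioo (x - ε) (x + ε)} := by
      ext ω
      rw [Set.mem_setOf_eq, Set.mem_setOf_eq, hk_eq]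
    rw [hseteq]
    exact final_incl hGmono Z hb hε k
  -- key inequality
  have key : ∀ k₀ n : ℕ,
      (((-K / (d:ℝ)^k₀) : ℝ) : EReal) + lpr P d γ lam Z MA k₀ (Set.Ioo (x - ε/2) (x + ε/2))
        ≤ lpr P d γ lam Z MA (k₀+n) (Set.Ioo (x - ε) (x + ε)) := by
    intro k₀ n
    set Q : ℝ≥0∞ := P {ω | Hk P d γ lam Z MA k₀ ω ∈ Set.Ioo (x - ε/2) (x + ε/2)} with hQ_def
    have hQle : Q ≤ P (EvO G d Z x (5*ε/8) η k₀) := measure_mono (hballSmall k₀)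
    have hur := unroll hZmeas hZindep hZgauss hv hd0 hGmeas hGmono x (5*ε/8) hη0 hη1 k₀ n
    have hfin : P (EvO G d Z x (5*ε/8) (η * (1/2)^n) (k₀ + n))
        ≤ P {ω | Hk P d γ lam Z MA (k₀+n) ω ∈ Set.Ioo (x - ε) (x + ε)} :=
      measure_mono (hballBig (k₀+n) _ (by positivity))
    have hLr := lrF_lb (gc_pos hv) hη0 hd n
    have hexpmono : Real.exp (-K * (d:ℝ)^n) ≤ Real.exp (LrF (gc v) η d n) := by
      refine Real.exp_le_exp.2 ?_
      rw [hK_def]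
      exact hLr
    have hchain : ENNReal.ofReal (Real.exp (-K * (d:ℝ)^n)) * Q ^ (d^n)
        ≤ P {ω | Hk P d γ lam Z MA (k₀+n) ω ∈ Set.Ioo (x - ε) (x + ε)} := by
      calc ENNReal.ofReal (Real.exp (-K * (d:ℝ)^n)) * Q ^ (d^n)
          ≤ ENNReal.ofReal (Real.exp (LrF (gc v) η d n)) * Q ^ (d^n) :=
            mul_le_mul_left (ENNReal.ofReal_le_ofReal hexpmono) _
        _ ≤ ENNReal.ofReal (Real.exp (LrF (gc v) η d n))
              * P (EvO G d Z x (5*ε/8) η k₀) ^ (d^n) :=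
            mul_le_mul_right (pow_le_pow_left' hQle _) _
        _ ≤ P (EvO G d Z x (5*ε/8) (η * (1/2)^n) (k₀ + n)) := hur
        _ ≤ P {ω | Hk P d γ lam Z MA (k₀+n) ω ∈ Set.Ioo (x - ε) (x + ε)} := hfin
    have hlog := ENNReal.log_monotone hchain
    rw [ENNReal.log_mul_add, ENNReal.log_pow, ENNReal.log_ofReal_of_pos (Real.exp_pos _),
      Real.log_exp] at hlog
    have hcoeff : (0:EReal) ≤ ((1 / (d:ℝ)^(k₀+n) : ℝ) : EReal) := by
      have : (0:ℝ) ≤ 1 / (d:ℝ)^(k₀+n) := by positivity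
      exact_mod_cast this
    have hmul := mul_le_mul_of_nonneg_left hlog hcoeff
    have hlqne : ENNReal.log Q ≠ ⊤ := by
      intro h
      have h1 : ENNReal.log Q ≤ 0 := ENNReal.log_le_zero_iff.2 prob_le_one
      rw [h] at h1
      exact absurd h1 (by simp)
    rw [ereal_scale hd k₀ n K _ hlqne] at hmul
    exact hmul
  -- liminf lower bound
  set Λ := liminf (fun k : ℕ => lpr P d γ lam Z MA k (Set.Ioo (x - ε) (x + ε))) atTop with hΛ_def
  have hLam : ∀ k₀ : ℕ,
      (((-K / (d:ℝ)^k₀) : ℝ) : EReal)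
        + lpr P d γ lam Z MA k₀ (Set.Ioo (x - ε/2) (x + ε/2)) ≤ Λ := by
    intro k₀
    refine Filter.le_liminf_of_le (by isBoundedDefault) ?_
    refine Filter.eventually_atTop.2 ⟨k₀, fun m hm => ?_⟩
    have h1 := key k₀ (m - k₀)
    rwa [Nat.add_sub_cancel' hm] at h1
  have hsmall : ∀ k₀ : ℕ, lpr P d γ lam Z MA k₀ (Set.Ioo (x - ε/2) (x + ε/2))
      ≤ Λ + ((K / (d:ℝ)^k₀ : ℝ) : EReal) := by
    intro k₀
    have h1 := ereal_cancel (K / (d:ℝ)^k₀)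
      (lpr P d γ lam Z MA k₀ (Set.Ioo (x - ε/2) (x + ε/2)))
    have h2 : ((-(K / (d:ℝ)^k₀) : ℝ) : EReal)
        + lpr P d γ lam Z MA k₀ (Set.Ioo (x - ε/2) (x + ε/2)) ≤ Λ := by
      have h3 : (-(K / (d:ℝ)^k₀) : ℝ) = (-K / (d:ℝ)^k₀ : ℝ) := by ring
      rw [h3]
      exact hLam k₀
    calc lpr P d γ lam Z MA k₀ (Set.Ioo (x - ε/2) (x + ε/2))
        ≤ (((-(K / (d:ℝ)^k₀) : ℝ) : EReal)
            + lpr P d γ lam Z MA k₀ (Set.Ioo (x - ε/2) (x + ε/2)))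
          + ((K / (d:ℝ)^k₀ : ℝ) : EReal) := h1
      _ ≤ Λ + ((K / (d:ℝ)^k₀ : ℝ) : EReal) := add_le_add_left h2 _
  refine le_trans (Filter.limsup_le_limsup (Filter.Eventually.of_forall hsmall)) ?_
  -- limsup (fun k => Λ + K/d^k) ≤ Λ
  have hfinal : ∀ δ : ℝ, 0 < δ →
      limsup (fun k : ℕ => Λ + ((K / (d:ℝ)^k : ℝ) : EReal)) atTop ≤ Λ + (δ : EReal) := by
    intro δ hδ
    refine Filter.limsup_le_of_le (by isBoundedDefault) ?_
    have hdR : (1:ℝ)/d < 1 := by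
      rw [div_lt_one (by exact_mod_cast hd0)]
      exact_mod_cast by omega
    have h1 : Tendsto (fun k : ℕ => ((1:ℝ)/d)^k) atTop (nhds 0) :=
      tendsto_pow_atTop_nhds_zero_of_lt_one (by positivity) hdR
    have h2 : Tendsto (fun k : ℕ => K * ((1:ℝ)/d)^k) atTop (nhds 0) := by
      have := h1.const_mul K
      simpa using this
    have h3 : Tendsto (fun k : ℕ => K / (d:ℝ)^k) atTop (nhds 0) := by
      refine h2.congr fun k => ?_
      rw [div_pow]
      rw [one_pow, mul_one_div]
    have hev : ∀ᶠ k in (atTop : Filter ℕ), K / (d:ℝ)^k ≤ δ :=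
      (h3.eventually (gt_mem_nhds hδ)).mono fun k hk => hk.le
    filter_upwards [hev] with k hk
    exact add_le_add_right (EReal.coe_le_coe_iff.2 hk) Λ
  by_cases hΛtop : Λ = ⊤
  · rw [hΛtop]
    exact le_top
  by_cases hΛbot : Λ = ⊥
  · calc limsup (fun k : ℕ => Λ + ((K / (d:ℝ)^k : ℝ) : EReal)) atTop
        ≤ Λ + ((1:ℝ) : EReal) := hfinal 1 one_pos
      _ = ⊥ := by rw [hΛbot]; exact EReal.bot_add _
      _ ≤ Λ := bot_le
  -- Λ real
  have hcoeΛ : ((Λ.toReal : ℝ) : EReal) = Λ := EReal.coe_toReal hΛtop hΛbot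
  set L : ℝ := Λ.toReal with hL_def
  by_contra hcon
  push_neg at hcon
  obtain ⟨r, hr1, hr2⟩ := EReal.exists_between_coe_real hcon
  have hLr' : L < r := by
    have h7 : ((L:ℝ) : EReal) < ((r:ℝ) : EReal) := by
      rw [hcoeΛ]
      exact hr1
    exact_mod_cast h7
  have hδ : 0 < r - L := by linarith
  have h5 := hfinal (r - L) hδ
  have h6 : Λ + ((r - L : ℝ) : EReal) = ((r : ℝ) : EReal) := by
    rw [← hcoeΛ, ← EReal.coe_add]
    norm_num
  rw [h6] at h5
  exact absurd (lt_of_lt_of_le hr2 h5) (lt_irrefl _)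

end

end S10


/-- For every `x ≥ 0` and `ε > 0` there is `ε̃ > 0` such that
`liminf_k d^{-k} log P(H_k ∈ B(x,ε)) ≥ limsup_k d^{-k} log P(H_k ∈ B(x,ε̃))`. -/
theorem stmt_10
    {Ω : Type} [MeasurableSpace Ω] (P : Measure Ω) [IsProbabilityMeasure P]
    (d : ℕ) (hd : 2 ≤ d)
    (γ : ℝ) (hγ0 : 0 < γ) (hγ : γ < Real.sqrt (2 * Real.log d))
    (Z : List (Fin d) × Fin d → Ω → ℝ)
    (hZmeas : ∀ e, Measurable (Z e))
    (hZindep : iIndepFun Z P)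
    (hZgauss : ∀ e, P.map (Z e) = gaussianReal 0 ((d : ℝ≥0) / ((d : ℝ≥0) - 1)))
    (MA : Ω → ℝ) (hMAmeas : Measurable MA)
    (hMAnonneg : ∀ᵐ ω ∂P, 0 ≤ MA ω)
    (hMAlim : ∀ᵐ ω ∂P, Tendsto (fun n => MAn d γ Z n ω) atTop (nhds (MA ω)))
    (hMAmean : ∫ ω, MA ω ∂P = 1)
    (hMAmom : ∀ θ : ℝ, 0 < θ → Integrable (fun ω => MA ω ^ (-θ)) P)
    (lam : ℝ) (hlam : 0 < lam) :
    ∀ x : ℝ, 0 ≤ x → ∀ ε : ℝ, 0 < ε →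
      ∃ εt : ℝ, 0 < εt ∧
        limsup (fun k : ℕ => lpr P d γ lam Z MA k (Set.Ioo (x - εt) (x + εt))) atTop
          ≤ liminf (fun k : ℕ => lpr P d γ lam Z MA k (Set.Ioo (x - ε) (x + ε))) atTop := by
  intro x hx ε hε
  refine ⟨ε/2, by positivity, ?_⟩
  exact S10.master P d hd γ lam hγ0 hlam Z hZmeas hZindep hZgauss MA hMAmeas hMAnonneg x hx ε hε
end
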